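/- arXiv:1509.08533 — 8 statements merged into one kernel-verified Lean document; each statement's English description precedes it below -/
import Mathlib

section
/- The function h(α) = Γ(α+3)·Γ(α/2 + 9/2) / (Γ(α/2+2)·Γ(α+9/2)) is increasing on the interval [0,2]. -/
open Real Filter Finset Topology

private lemma prod_pos' {x : ℝ} (hx : 0 < x) (n : ℕ) (c : ℝ) (hc : 0 ≤ c) :
    0 < ∏ j ∈ range (n+1), (x + c + j) := by
  apply Finset.prod_pos
  intro j _
  have : (0:ℝ) ≤ j := Nat.cast_nonneg j
  linarith

private lemma prod_tel (x : ℝ) (n : ℕ) :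
    (∏ j ∈ range (n+1), (x + j)) * (∏ j ∈ range (n+1), (x + 3 + j)) *
      ((x + n + 1) * (x + 1) * (x + 2)) =
    (∏ j ∈ range (n+1), (x + 1 + j))^2 * (x * (x + n + 2) * (x + n + 3)) := by
  induction n with
  | zero => simp; ring
  | succ m ih =>
      rw [prod_range_succ, prod_range_succ (f := fun j => (x + 3 + j)),
        prod_range_succ (f := fun j => (x + 1 + j))]
      push_cast
      push_cast at ih
      linear_combination (x + 3 + (m+1)) * (x + (m+1) + 1) * ih

private lemma prod_num (x : ℝ) (n : ℕ) :
    (∏ j ∈ range (n+1), (x + 3/4 + j)) * (∏ j ∈ range (n+1), (x + 5/4 + j)) =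
    ∏ j ∈ range (n+1), ((x + 1 + j)^2 - 1/16) := by
  rw [← prod_mul_distrib]
  exact prod_congr rfl (fun j _ => by ring)

private lemma gammaSeq_ratio {x : ℝ} (hx : 0 < x) {n : ℕ} (hn : n ≠ 0) :
    Real.GammaSeq x n * Real.GammaSeq (x+3) n /
      (Real.GammaSeq (x+3/4) n * Real.GammaSeq (x+5/4) n) =
    (n * (x+n+1) * (x+1) * (x+2) / (x * (x+n+2) * (x+n+3))) *
      ∏ j ∈ range (n+1), (1 - 1/(16*(x+1+j)^2)) := by
  have hnp : (0:ℝ) < n := Nat.cast_pos.mpr (Nat.pos_of_ne_zero hn)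
  have P0 : 0 < ∏ j ∈ range (n+1), (x + j) := by
    have := prod_pos' hx n 0 le_rfl
    simpa using this
  have P3 : 0 < ∏ j ∈ range (n+1), (x + 3 + j) := prod_pos' hx n 3 (by norm_num)
  have Pa : 0 < ∏ j ∈ range (n+1), (x + 3/4 + j) := prod_pos' hx n (3/4) (by norm_num)
  have Pb : 0 < ∏ j ∈ range (n+1), (x + 5/4 + j) := prod_pos' hx n (5/4) (by norm_num)
  have P1 : 0 < ∏ j ∈ range (n+1), (x + 1 + j) := prod_pos' hx n 1 (by norm_num)
  have hfact : (0:ℝ) < (Nat.factorial n : ℝ) := by positivity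
  have hr : (n:ℝ)^x * (n:ℝ)^(x+3) / ((n:ℝ)^(x+3/4) * (n:ℝ)^(x+5/4)) = n := by
    rw [← Real.rpow_add hnp, ← Real.rpow_add hnp, ← Real.rpow_sub hnp,
      show x + (x + 3) - (x + 3 / 4 + (x + 5 / 4)) = 1 by ring, Real.rpow_one]
  have hq : (∏ j ∈ range (n+1), (1 - 1/(16*(x+1+j)^2))) =
      (∏ j ∈ range (n+1), ((x + 1 + j)^2 - 1/16)) / (∏ j ∈ range (n+1), (x + 1 + j))^2 := by
    rw [← prod_pow, ← prod_div_distrib]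
    refine prod_congr rfl (fun j _ => ?_)
    have hj : (0:ℝ) < x + 1 + j := by
      have : (0:ℝ) ≤ j := Nat.cast_nonneg j
      linarith
    field_simp
  have step1 : Real.GammaSeq x n * Real.GammaSeq (x+3) n /
      (Real.GammaSeq (x+3/4) n * Real.GammaSeq (x+5/4) n) =
      n * ((∏ j ∈ range (n+1), (x + 3/4 + j)) * (∏ j ∈ range (n+1), (x + 5/4 + j))) /
        ((∏ j ∈ range (n+1), (x + j)) * (∏ j ∈ range (n+1), (x + 3 + j))) := by
    rw [show (n:ℝ) * ((∏ j ∈ range (n+1), (x + 3/4 + j)) * (∏ j ∈ range (n+1), (x + 5/4 + j))) /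
        ((∏ j ∈ range (n+1), (x + j)) * (∏ j ∈ range (n+1), (x + 3 + j)))
      = ((n:ℝ)^x * (n:ℝ)^(x+3) / ((n:ℝ)^(x+3/4) * (n:ℝ)^(x+5/4))) *
        (((∏ j ∈ range (n+1), (x + 3/4 + j)) * (∏ j ∈ range (n+1), (x + 5/4 + j))) /
        ((∏ j ∈ range (n+1), (x + j)) * (∏ j ∈ range (n+1), (x + 3 + j)))) from by rw [hr, mul_div_assoc],
      Real.GammaSeq, Real.GammaSeq, Real.GammaSeq, Real.GammaSeq]
    have e1 : ((n:ℝ)^x) ≠ 0 := (Real.rpow_pos_of_pos hnp _).ne'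
    have e2 : ((n:ℝ)^(x+3)) ≠ 0 := (Real.rpow_pos_of_pos hnp _).ne'
    have e3 : ((n:ℝ)^(x+3/4)) ≠ 0 := (Real.rpow_pos_of_pos hnp _).ne'
    have e4 : ((n:ℝ)^(x+5/4)) ≠ 0 := (Real.rpow_pos_of_pos hnp _).ne'
    field_simp
  rw [step1, hq, ← prod_num x n]
  rw [div_mul_div_comm, div_eq_div_iff (by positivity) (by positivity)]
  linear_combination (-(n:ℝ)) * ((∏ j ∈ range (n+1), (x + 3/4 + j)) * (∏ j ∈ range (n+1), (x + 5/4 + j))) * prod_tel x n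

private lemma B_tendsto {x : ℝ} (hx : 0 < x) :
    Tendsto (fun n : ℕ => ((n:ℝ) * (x+n+1) * (x+1) * (x+2) / (x * (x+n+2) * (x+n+3))))
      atTop (𝓝 ((x+1)*(x+2)/x)) := by
  have h0 : ∀ c : ℝ, Tendsto (fun n : ℕ => c/(n:ℝ)) atTop (𝓝 0) :=
    fun c => tendsto_const_div_atTop_nhds_zero_nat c
  have T : Tendsto (fun n : ℕ =>
      ((x+1)*(x+2)/x) * ((1+(x+1)/n) / ((1+(x+2)/n)*(1+(x+3)/n)))) atTop
      (𝓝 (((x+1)*(x+2)/x) * ((1+0) / ((1+0)*(1+0))))) := by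
    refine Tendsto.const_mul _ (Tendsto.div (Tendsto.const_add _ (h0 (x+1)))
      (Tendsto.mul (Tendsto.const_add _ (h0 (x+2))) (Tendsto.const_add _ (h0 (x+3)))) (by norm_num))
  norm_num at T
  refine T.congr' ?_
  filter_upwards [eventually_ge_atTop 1] with n hn
  have hnp : (0:ℝ) < n := by exact_mod_cast hn
  field_simp
  ring

private lemma Gamma_pos' {x : ℝ} (hx : 0 < x) (c : ℝ) (hc : 0 ≤ c) : 0 < Real.Gamma (x + c) :=
  Real.Gamma_pos_of_pos (by linarith)

private lemma A_tendsto {x : ℝ} (hx : 0 < x) :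
    Tendsto (fun n : ℕ => Real.GammaSeq x n * Real.GammaSeq (x+3) n /
      (Real.GammaSeq (x+3/4) n * Real.GammaSeq (x+5/4) n)) atTop
      (𝓝 (Real.Gamma x * Real.Gamma (x+3) / (Real.Gamma (x+3/4) * Real.Gamma (x+5/4)))) := by
  refine Tendsto.div ((Real.GammaSeq_tendsto_Gamma x).mul (Real.GammaSeq_tendsto_Gamma (x+3)))
    ((Real.GammaSeq_tendsto_Gamma (x+3/4)).mul (Real.GammaSeq_tendsto_Gamma (x+5/4))) ?_
  have h1 := Gamma_pos' hx (3/4) (by norm_num)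
  have h2 := Gamma_pos' hx (5/4) (by norm_num)
  positivity

private lemma G_lt {a b : ℝ} (ha : 3/2 ≤ a) (hab : a < b) (hb : b ≤ 5/2) :
    Real.Gamma a * Real.Gamma (a+3) / (Real.Gamma (a+3/4) * Real.Gamma (a+5/4)) <
    Real.Gamma b * Real.Gamma (b+3) / (Real.Gamma (b+3/4) * Real.Gamma (b+5/4)) := by
  have ha0 : (0:ℝ) < a := by linarith
  have hb0 : (0:ℝ) < b := by linarith
  set Ga := Real.Gamma a * Real.Gamma (a+3) / (Real.Gamma (a+3/4) * Real.Gamma (a+5/4)) with hGa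
  set Gb := Real.Gamma b * Real.Gamma (b+3) / (Real.Gamma (b+3/4) * Real.Gamma (b+5/4)) with hGb
  have hGapos : 0 < Ga := by
    rw [hGa]
    have := Real.Gamma_pos_of_pos ha0
    have := Gamma_pos' ha0 3 (by norm_num)
    have := Gamma_pos' ha0 (3/4) (by norm_num)
    have := Gamma_pos' ha0 (5/4) (by norm_num)
    positivity
  have key : Ga * ((b+1)*(b+2)/b) ≤ Gb * ((a+1)*(a+2)/a) := by
    refine le_of_tendsto_of_tendsto ((A_tendsto ha0).mul (B_tendsto hb0))
      ((A_tendsto hb0).mul (B_tendsto ha0)) ?_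
    filter_upwards [eventually_ge_atTop 1] with n hn
    have hn0 : n ≠ 0 := by omega
    rw [gammaSeq_ratio ha0 hn0, gammaSeq_ratio hb0 hn0]
    have hnp : (0:ℝ) < n := by exact_mod_cast hn
    set Ba := (n:ℝ) * (a+n+1) * (a+1) * (a+2) / (a * (a+n+2) * (a+n+3)) with hBa
    set Bb := (n:ℝ) * (b+n+1) * (b+1) * (b+2) / (b * (b+n+2) * (b+n+3)) with hBb
    have hBa0 : 0 ≤ Ba := by rw [hBa]; positivity
    have hBb0 : 0 ≤ Bb := by rw [hBb]; positivity
    have hQ : (∏ j ∈ range (n+1), (1 - 1/(16*(a+1+j)^2))) ≤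
        (∏ j ∈ range (n+1), (1 - 1/(16*(b+1+j)^2))) := by
      refine Finset.prod_le_prod (fun j _ => ?_) (fun j _ => ?_)
      · have hj : (0:ℝ) ≤ j := Nat.cast_nonneg j
        have h1 : (1:ℝ) ≤ 16*(a+1+j)^2 := by nlinarith
        have h2 : (0:ℝ) < 16*(a+1+j)^2 := by nlinarith
        have := (div_le_one h2).mpr h1
        linarith
      · have hj : (0:ℝ) ≤ j := Nat.cast_nonneg j
        have h2 : (0:ℝ) < 16*(a+1+j)^2 := by nlinarith
        have h3 : 16*(a+1+j)^2 ≤ 16*(b+1+j)^2 := by nlinarith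
        have := one_div_le_one_div_of_le h2 h3
        linarith
    have h := mul_le_mul_of_nonneg_left hQ (mul_nonneg hBa0 hBb0)
    calc Ba * (∏ j ∈ range (n+1), (1 - 1/(16*(a+1+j)^2))) * Bb
        = Ba * Bb * (∏ j ∈ range (n+1), (1 - 1/(16*(a+1+j)^2))) := by ring
      _ ≤ Ba * Bb * (∏ j ∈ range (n+1), (1 - 1/(16*(b+1+j)^2))) := h
      _ = Bb * (∏ j ∈ range (n+1), (1 - 1/(16*(b+1+j)^2))) * Ba := by ring
  have hBlt : (a+1)*(a+2)/a < (b+1)*(b+2)/b := by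
    rw [div_lt_div_iff₀ ha0 hb0]
    have h25 : 0 < a*b - 2 := by nlinarith
    nlinarith [mul_pos (sub_pos.mpr hab) h25]
  have h2 : Ga * ((a+1)*(a+2)/a) < Gb * ((a+1)*(a+2)/a) :=
    lt_of_lt_of_le (by exact mul_lt_mul_of_pos_left hBlt hGapos) key
  have hBpos : 0 < (a+1)*(a+2)/a := by positivity
  exact lt_of_mul_lt_mul_right h2 hBpos.le

private lemma h_eq {α : ℝ} (h0 : 0 ≤ α) (h2 : α ≤ 2) :
    Real.Gamma (α+3) * Real.Gamma (α/2+9/2) / (Real.Gamma (α/2+2) * Real.Gamma (α+9/2))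
    = (2:ℝ)^(-(3:ℝ)/2) * (Real.Gamma (α/2+3/2) * Real.Gamma (α/2+3/2+3) /
        (Real.Gamma (α/2+3/2+3/4) * Real.Gamma (α/2+3/2+5/4))) := by
  have e1 := Real.Gamma_mul_Gamma_add_half (α/2+3/2)
  have e2 := Real.Gamma_mul_Gamma_add_half (α/2+9/4)
  rw [show α/2+3/2+1/2 = α/2+2 by ring, show 2*(α/2+3/2) = α+3 by ring] at e1
  rw [show α/2+9/4+1/2 = α/2+3/2+5/4 by ring, show 2*(α/2+9/4) = α+9/2 by ring,
    show α/2+9/4 = α/2+3/2+3/4 by ring] at e2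
  have hsq : (0:ℝ) < Real.sqrt π := Real.sqrt_pos.mpr Real.pi_pos
  have p1 : 0 < Real.Gamma (α/2+3/2) := Real.Gamma_pos_of_pos (by linarith)
  have p2 : 0 < Real.Gamma (α/2+2) := Real.Gamma_pos_of_pos (by linarith)
  have p3 : 0 < Real.Gamma (α/2+3/2+3/4) := Real.Gamma_pos_of_pos (by linarith)
  have p4 : 0 < Real.Gamma (α/2+3/2+5/4) := Real.Gamma_pos_of_pos (by linarith)
  have p5 : 0 < Real.Gamma (α+9/2) := Real.Gamma_pos_of_pos (by linarith)
  have p6 : 0 < Real.Gamma (α/2+3/2+3) := Real.Gamma_pos_of_pos (by linarith)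
  have p7 : 0 < Real.Gamma (α/2+9/2) := Real.Gamma_pos_of_pos (by linarith)
  have q1 : (0:ℝ) < (2:ℝ)^(1-(α+3)) := Real.rpow_pos_of_pos two_pos _
  have q2 : (0:ℝ) < (2:ℝ)^(1-(α+9/2)) := Real.rpow_pos_of_pos two_pos _
  -- Γ(α+3) from e1, Γ(α+9/2) from e2
  have E1 : Real.Gamma (α+3) =
      Real.Gamma (α/2+3/2) * Real.Gamma (α/2+2) / ((2:ℝ)^(1-(α+3)) * Real.sqrt π) := by
    rw [eq_div_iff (by positivity)]
    linarith [e1]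
  have E2 : Real.Gamma (α+9/2) =
      Real.Gamma (α/2+3/2+3/4) * Real.Gamma (α/2+3/2+5/4) / ((2:ℝ)^(1-(α+9/2)) * Real.sqrt π) := by
    rw [eq_div_iff (by positivity)]
    linarith [e2]
  rw [E1, E2]
  have hgoal9 : α/2+9/2 = α/2+3/2+3 := by ring
  rw [hgoal9]
  have hpow : (2:ℝ)^(1-(α+9/2)) = (2:ℝ)^(1-(α+3)) * (2:ℝ)^(-(3:ℝ)/2) := by
    rw [show (1:ℝ)-(α+9/2) = (1-(α+3)) + (-(3:ℝ)/2) by ring, Real.rpow_add two_pos]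
  rw [hpow]
  have q3 : (0:ℝ) < (2:ℝ)^(-(3:ℝ)/2) := Real.rpow_pos_of_pos two_pos _
  field_simp

theorem gamma_ratio_increasing :
    StrictMonoOn (fun α : ℝ =>
      Real.Gamma (α + 3) * Real.Gamma (α / 2 + 9 / 2) /
        (Real.Gamma (α / 2 + 2) * Real.Gamma (α + 9 / 2)))
      (Set.Icc (0 : ℝ) 2) := by
  intro a ha b hb hab
  simp only
  rw [h_eq ha.1 ha.2, h_eq hb.1 hb.2]
  refine mul_lt_mul_of_pos_left ?_ (Real.rpow_pos_of_pos two_pos _)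
  exact G_lt (by linarith [ha.1]) (by linarith) (by linarith [hb.2])
end

section
/- The function h(α) = Γ(α/2+2)·Γ(α+7/2) / (Γ(α/2+9/2)·Γ(α+1)) is increasing on the interval [0,2]. -/
open Real Set Filter Finset Topology

lemma convexOn_log_sub {a b : ℝ} (ha : 0 ≤ a) (hab : a ≤ b) :
    ConvexOn ℝ (Set.Ioi (0:ℝ)) (fun x => Real.log (x + b) - Real.log (x + a)) := by
  have hb : 0 ≤ b := ha.trans hab
  apply convexOn_of_hasDerivWithinAt2_nonneg (convex_Ioi 0)
    (f' := fun x => (x + b)⁻¹ - (x + a)⁻¹) (f'' := fun x => -(((x+b)^2)⁻¹) + ((x+a)^2)⁻¹)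
  · refine ContinuousOn.sub ?_ ?_
    · exact (continuousOn_id.add continuousOn_const).log
        (fun x hx => by have : (0:ℝ) < x := hx; show x + b ≠ 0; positivity)
    · exact (continuousOn_id.add continuousOn_const).log
        (fun x hx => by have : (0:ℝ) < x := hx; show x + a ≠ 0; positivity)
  · rw [interior_Ioi]
    intro x hx
    have hx0 : (0:ℝ) < x := hx
    have h1 : HasDerivAt (fun y : ℝ => Real.log (y + b)) (x+b)⁻¹ x := by
      have := (((hasDerivAt_id x).add_const b).log (by positivity))
      simpa using this
    have h2 : HasDerivAt (fun y : ℝ => Real.log (y + a)) (x+a)⁻¹ x := by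
      have := (((hasDerivAt_id x).add_const a).log (by positivity))
      simpa using this
    exact (h1.sub h2).hasDerivWithinAt
  · rw [interior_Ioi]
    intro x hx
    have hx0 : (0:ℝ) < x := hx
    have h1 : HasDerivAt (fun y : ℝ => (y + b)⁻¹) (-(((x+b)^2)⁻¹)) x := by
      have := ((hasDerivAt_id x).add_const b).inv (by positivity)
      simpa [neg_div, one_div, Pi.inv_def] using this
    have h2 : HasDerivAt (fun y : ℝ => (y + a)⁻¹) (-(((x+a)^2)⁻¹)) x := by
      have := ((hasDerivAt_id x).add_const a).inv (by positivity)
      simpa [neg_div, one_div, Pi.inv_def] using this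
    have : HasDerivWithinAt (fun y => (y + b)⁻¹ - (y + a)⁻¹) (-((x + b) ^ 2)⁻¹ - -((x + a) ^ 2)⁻¹) (Set.Ioi 0) x :=
      (h1.sub h2).hasDerivWithinAt (s := Set.Ioi 0)
    convert this using 1
    ring
  · rw [interior_Ioi]
    intro x hx
    have hx0 : (0:ℝ) < x := hx
    have h1 : (x+a)^2 ≤ (x+b)^2 := by nlinarith
    have h2 : (0:ℝ) < (x+a)^2 := by positivity
    have := inv_anti₀ h2 h1
    linarith

lemma convexOn_finsum {ι : Type*} (t : Finset ι) {f : ι → ℝ → ℝ}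
    (h : ∀ i ∈ t, ConvexOn ℝ (Set.Ioi (0:ℝ)) (f i)) :
    ConvexOn ℝ (Set.Ioi (0:ℝ)) (fun x => ∑ i ∈ t, f i x) := by
  induction t using Finset.cons_induction with
  | empty => simpa using convexOn_const (0:ℝ) (convex_Ioi 0)
  | cons i s his ih =>
    simp only [Finset.sum_cons]
    exact (h i (Finset.mem_cons_self i s)).add (ih fun j hj => h j (Finset.mem_cons.2 (Or.inr hj)))

noncomputable def DeltaFn (x : ℝ) : ℝ := Real.log (Real.Gamma (x + 5/2)) - Real.log (Real.Gamma x)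

lemma log_gammaSeq {x : ℝ} (hx : 0 < x) {n : ℕ} (hn : 1 ≤ n) :
    Real.log (Real.GammaSeq x n)
      = x * Real.log n + Real.log (n.factorial : ℝ) - ∑ j ∈ Finset.range (n+1), Real.log (x + j) := by
  have hn0 : (0:ℝ) < n := by exact_mod_cast hn
  have hprod : ∀ j ∈ Finset.range (n+1), x + (j:ℝ) ≠ 0 := by
    intro j _
    have : (0:ℝ) ≤ j := by positivity
    linarith
  rw [Real.GammaSeq, Real.log_div, Real.log_mul, Real.log_rpow hn0, Real.log_prod hprod]
  · positivity
  · exact_mod_cast Nat.factorial_ne_zero n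
  · positivity
  · exact Finset.prod_ne_zero_iff.2 hprod

lemma gammaSeq_diff_formula {x : ℝ} (hx : 0 < x) {n : ℕ} (hn : 1 ≤ n) :
    Real.log (Real.GammaSeq (x + 5/2) n) - Real.log (Real.GammaSeq x n)
      = (5/2) * Real.log n
        - ∑ j ∈ Finset.range (n+1), (Real.log (x + ((j:ℝ) + 5/2)) - Real.log (x + (j:ℝ))) := by
  have h1 := log_gammaSeq (show (0:ℝ) < x + 5/2 by linarith) hn
  have h2 := log_gammaSeq hx hn
  have h3 : ∀ j ∈ Finset.range (n+1), x + 5/2 + (j:ℝ) = x + ((j:ℝ) + 5/2) := by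
    intro j _; ring
  rw [h1, h2, Finset.sum_congr rfl (fun j hj => by rw [h3 j hj]), Finset.sum_sub_distrib]
  ring

lemma concaveOn_deltaFn : ConcaveOn ℝ (Set.Ioi (0:ℝ)) DeltaFn := by
  refine ⟨convex_Ioi 0, ?_⟩
  intro x hx y hy a b ha hb hab
  have key : ∀ t : ℝ, t ∈ Set.Ioi (0:ℝ) → Tendsto
      (fun n : ℕ => Real.log (Real.GammaSeq (t + 5/2) n) - Real.log (Real.GammaSeq t n))
      atTop (𝓝 (DeltaFn t)) := by
    intro t ht
    have ht0 : (0:ℝ) < t := ht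
    have g1 : Tendsto (fun n : ℕ => Real.log (Real.GammaSeq (t + 5/2) n)) atTop
        (𝓝 (Real.log (Real.Gamma (t + 5/2)))) :=
      ((Real.continuousAt_log (Real.Gamma_pos_of_pos (by linarith)).ne').tendsto).comp
        (Real.GammaSeq_tendsto_Gamma (t + 5/2))
    have g2 : Tendsto (fun n : ℕ => Real.log (Real.GammaSeq t n)) atTop
        (𝓝 (Real.log (Real.Gamma t))) :=
      ((Real.continuousAt_log (Real.Gamma_pos_of_pos ht0).ne').tendsto).comp
        (Real.GammaSeq_tendsto_Gamma t)
    exact g1.sub g2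
  have hmem : a • x + b • y ∈ Set.Ioi (0:ℝ) := (convex_Ioi 0) hx hy ha hb hab
  refine le_of_tendsto_of_tendsto (((key x hx).const_smul a).add ((key y hy).const_smul b))
    (key _ hmem) ?_
  filter_upwards [eventually_ge_atTop 1] with n hn
  have hconv : ConvexOn ℝ (Set.Ioi (0:ℝ))
      (fun t => ∑ j ∈ Finset.range (n+1), (Real.log (t + ((j:ℝ) + 5/2)) - Real.log (t + (j:ℝ)))) := by
    apply convexOn_finsum
    intro j _
    exact convexOn_log_sub (by positivity) (by linarith)
  have hS := hconv.2 hx hy ha hb hab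
  have e1 := gammaSeq_diff_formula (show (0:ℝ) < x from hx) hn
  have e2 := gammaSeq_diff_formula (show (0:ℝ) < y from hy) hn
  have e3 := gammaSeq_diff_formula (show (0:ℝ) < a • x + b • y from hmem) hn
  simp only [smul_eq_mul] at hS e3 ⊢
  rw [e1, e2, e3]
  set C := (5/2 : ℝ) * Real.log n with hC
  set Sx := ∑ j ∈ Finset.range (n+1), (Real.log (x + ((j:ℝ) + 5/2)) - Real.log (x + (j:ℝ))) with hSx
  set Sy := ∑ j ∈ Finset.range (n+1), (Real.log (y + ((j:ℝ) + 5/2)) - Real.log (y + (j:ℝ))) with hSy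
  set Sz := ∑ j ∈ Finset.range (n+1), (Real.log (a*x + b*y + ((j:ℝ) + 5/2)) - Real.log (a*x + b*y + (j:ℝ))) with hSz
  have h : a*(C-Sx)+b*(C-Sy) = (a+b)*C - (a*Sx+b*Sy) := by ring
  rw [h, hab, one_mul]
  linarith [hS]
lemma deltaFn_add_one {x : ℝ} (hx : 0 < x) :
    DeltaFn (x + 1) = DeltaFn x + (Real.log (x + 5/2) - Real.log x) := by
  unfold DeltaFn
  have h1 : Real.Gamma (x + 1 + 5/2) = (x + 5/2) * Real.Gamma (x + 5/2) := by
    rw [show x + 1 + 5/2 = (x + 5/2) + 1 by ring, Real.Gamma_add_one (by positivity)]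
  rw [h1, Real.Gamma_add_one hx.ne',
    Real.log_mul (by positivity) (Real.Gamma_pos_of_pos (by positivity)).ne',
    Real.log_mul hx.ne' (Real.Gamma_pos_of_pos hx).ne']
  ring

lemma deltaFn_key {α β : ℝ} (hα0 : 0 ≤ α) (hβ2 : β ≤ 2) (hαβ : α < β) :
    DeltaFn (β/2 + 2) - DeltaFn (α/2 + 2) < DeltaFn (β + 1) - DeltaFn (α + 1) := by
  have C := concaveOn_deltaFn
  set m : ℝ := α + 1 + (β - α) / 2 with hm
  have hmem : ∀ t : ℝ, 0 < t → t ∈ Set.Ioi (0:ℝ) := fun t ht => ht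
  have h1 : (0:ℝ) < α + 1 := by linarith
  have h2 : α + 1 < m := by rw [hm]; linarith
  have h3 : m ≤ α/2 + 2 := by rw [hm]; linarith
  have h4 : α/2 + 2 < β/2 + 2 := by linarith
  have h5 : m < β + 1 := by rw [hm]; linarith
  have h6 : β + 1 < β + 2 := by linarith
  -- Step 1 : slope over [α/2+2, β/2+2] ≤ slope over [α+1, m]
  have step1 : (DeltaFn (β/2+2) - DeltaFn (α/2+2)) / (β/2+2 - (α/2+2))
      ≤ (DeltaFn m - DeltaFn (α+1)) / (m - (α+1)) := by
    rcases eq_or_lt_of_le h3 with h3e | h3l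
    · have := C.slope_anti_adjacent (hmem _ h1) (hmem _ (by linarith : (0:ℝ) < β/2+2)) h2
        (show m < β/2+2 by rw [h3e]; exact h4)
      rw [h3e] at this ⊢
      exact this
    · have s1 := C.slope_anti_adjacent (hmem _ h1) (hmem _ (by linarith : (0:ℝ) < α/2+2)) h2 h3l
      have s2 := C.slope_anti_adjacent (hmem _ (by rw [hm]; linarith : (0:ℝ) < m))
        (hmem _ (by linarith : (0:ℝ) < β/2+2)) h3l h4
      exact s2.trans s1
  have hden : β/2+2 - (α/2+2) = m - (α+1) := by rw [hm]; ring
  have step1' : DeltaFn (β/2+2) - DeltaFn (α/2+2) ≤ DeltaFn m - DeltaFn (α+1) := by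
    rw [hden] at step1
    have hpos : (0:ℝ) < m - (α+1) := by linarith
    have := mul_le_mul_of_nonneg_right step1 hpos.le
    rwa [div_mul_cancel₀ _ hpos.ne', div_mul_cancel₀ _ hpos.ne'] at this
  -- Step 2 : DeltaFn m < DeltaFn (β+1)
  have step2 : DeltaFn m < DeltaFn (β + 1) := by
    have hs := C.slope_anti_adjacent (hmem _ (by rw [hm]; linarith : (0:ℝ) < m))
      (hmem _ (by linarith : (0:ℝ) < β + 2)) h5 h6
    have hrec : DeltaFn (β + 1 + 1) = DeltaFn (β+1) + (Real.log (β + 1 + 5/2) - Real.log (β+1)) :=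
      deltaFn_add_one (by linarith)
    have hlog : 0 < Real.log (β + 1 + 5/2) - Real.log (β + 1) := by
      have := Real.log_lt_log (by linarith : (0:ℝ) < β + 1) (by linarith : β + 1 < β + 1 + 5/2)
      linarith
    have hnum : 0 < DeltaFn (β + 2) - DeltaFn (β + 1) := by
      rw [show β + 2 = β + 1 + 1 by ring, hrec]; linarith
    have hpos2 : (0:ℝ) < β + 1 - m := by linarith
    have hslopepos : 0 < (DeltaFn (β+1) - DeltaFn m) / (β + 1 - m) := by
      refine lt_of_lt_of_le ?_ hs
      apply div_pos hnum
      linarith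
    have hA : 0 < DeltaFn (β+1) - DeltaFn m := by
      have := mul_pos hslopepos hpos2
      rwa [div_mul_cancel₀ _ hpos2.ne'] at this
    linarith
  linarith

lemma value_repr {γ : ℝ} (hγ : 0 ≤ γ) :
    Real.Gamma (γ / 2 + 2) * Real.Gamma (γ + 7 / 2) /
      (Real.Gamma (γ / 2 + 9 / 2) * Real.Gamma (γ + 1))
    = Real.exp (DeltaFn (γ + 1) - DeltaFn (γ / 2 + 2)) := by
  have p1 : 0 < Real.Gamma (γ/2 + 2) := Real.Gamma_pos_of_pos (by linarith)
  have p2 : 0 < Real.Gamma (γ + 7/2) := Real.Gamma_pos_of_pos (by linarith)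
  have p3 : 0 < Real.Gamma (γ/2 + 9/2) := Real.Gamma_pos_of_pos (by linarith)
  have p4 : 0 < Real.Gamma (γ + 1) := Real.Gamma_pos_of_pos (by linarith)
  rw [← Real.exp_log (div_pos (mul_pos p1 p2) (mul_pos p3 p4))]
  congr 1
  rw [Real.log_div (mul_pos p1 p2).ne' (mul_pos p3 p4).ne', Real.log_mul p1.ne' p2.ne',
    Real.log_mul p3.ne' p4.ne']
  unfold DeltaFn
  rw [show γ + 1 + 5/2 = γ + 7/2 by ring, show γ/2 + 2 + 5/2 = γ/2 + 9/2 by ring]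
  ring

theorem gamma_ratio_increasing' :
    StrictMonoOn (fun α : ℝ =>
      Real.Gamma (α / 2 + 2) * Real.Gamma (α + 7 / 2) /
        (Real.Gamma (α / 2 + 9 / 2) * Real.Gamma (α + 1)))
      (Set.Icc (0 : ℝ) 2) := by
  intro α hα β hβ hαβ
  simp only
  rw [value_repr hα.1, value_repr hβ.1]
  exact Real.exp_lt_exp.mpr (by have := deltaFn_key hα.1 hβ.2 hαβ; linarith)
end

section
/- For all z > 0, ψ(z+9/2) + ψ(z+3/2) − ψ(z+9/4) − ψ(z+11/4) > 0, where ψ is the digamma function. -/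
open Real

/-- The digamma function `ψ = Γ'/Γ`. -/
noncomputable def digamma (x : ℝ) : ℝ := deriv Real.Gamma x / Real.Gamma x

lemma DG.hasDerivAt_gamma {x : ℝ} (hx : 0 < x) :
    HasDerivAt Real.Gamma (deriv Real.Gamma x) x :=
  (Real.differentiableAt_Gamma fun m =>
    ne_of_gt (lt_of_le_of_lt (neg_nonpos.2 m.cast_nonneg) hx)).hasDerivAt

lemma DG.hasDerivAt_logGamma {x : ℝ} (hx : 0 < x) :
    HasDerivAt (Real.log ∘ Real.Gamma) (digamma x) x := by
  have h := (DG.hasDerivAt_gamma hx).log (Real.Gamma_pos_of_pos hx).ne'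
  simpa [digamma, Function.comp_def] using h

lemma DG.digamma_add_one {x : ℝ} (hx : 0 < x) : digamma (x + 1) = digamma x + 1 / x := by
  have hx1 : (0:ℝ) < x + 1 := by linarith
  have h1 : HasDerivAt (fun y : ℝ => Real.Gamma (y + 1)) (deriv Real.Gamma (x + 1)) x := by
    simpa [Function.comp_def] using (DG.hasDerivAt_gamma hx1).comp x ((hasDerivAt_id x).add_const 1)
  have h2 : HasDerivAt (fun y : ℝ => y * Real.Gamma y)
      (1 * Real.Gamma x + x * deriv Real.Gamma x) x :=
    (hasDerivAt_id x).mul (DG.hasDerivAt_gamma hx)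
  have heq : (fun y : ℝ => y * Real.Gamma y) =ᶠ[nhds x] fun y : ℝ => Real.Gamma (y + 1) := by
    filter_upwards [eventually_gt_nhds hx] with y hy
    rw [Real.Gamma_add_one (ne_of_gt hy)]
  have hkey : deriv Real.Gamma (x + 1) = 1 * Real.Gamma x + x * deriv Real.Gamma x :=
    (h1.congr_of_eventuallyEq heq).unique h2
  have hG : Real.Gamma x ≠ 0 := (Real.Gamma_pos_of_pos hx).ne'
  unfold digamma
  rw [hkey, Real.Gamma_add_one hx.ne']
  field_simp
  ring

lemma DG.digamma_add_nat {x : ℝ} (hx : 0 < x) (n : ℕ) :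
    digamma (x + n) = digamma x + ∑ k ∈ Finset.range n, 1 / (x + k) := by
  induction n with
  | zero => simp
  | succ n ih =>
    have hxn : 0 < x + n := by positivity
    have h : x + ((n : ℕ) + 1 : ℕ) = (x + n) + 1 := by push_cast; ring
    rw [h, DG.digamma_add_one hxn, ih, Finset.sum_range_succ]
    ring

lemma DG.slope_le_digamma {a b : ℝ} (ha : 0 < a) (hab : a < b) :
    (Real.log (Real.Gamma b) - Real.log (Real.Gamma a)) / (b - a) ≤ digamma b := by
  have h := Real.convexOn_log_Gamma.slope_le_of_hasDerivAt (Set.mem_Ioi.2 ha)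
    (Set.mem_Ioi.2 (ha.trans hab)) hab (DG.hasDerivAt_logGamma (ha.trans hab))
  rw [slope_def_field] at h
  simp only [Function.comp_apply] at h
  exact h

lemma DG.digamma_le_slope {a b : ℝ} (ha : 0 < a) (hab : a < b) :
    digamma a ≤ (Real.log (Real.Gamma b) - Real.log (Real.Gamma a)) / (b - a) := by
  have h := Real.convexOn_log_Gamma.le_slope_of_hasDerivAt (Set.mem_Ioi.2 ha)
    (Set.mem_Ioi.2 (ha.trans hab)) hab (DG.hasDerivAt_logGamma ha)
  rw [slope_def_field] at h
  simp only [Function.comp_apply] at h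
  exact h

lemma DG.log_gamma_add_one {y : ℝ} (hy : 0 < y) :
    Real.log (Real.Gamma (y + 1)) = Real.log y + Real.log (Real.Gamma y) := by
  rw [Real.Gamma_add_one hy.ne', Real.log_mul hy.ne' (Real.Gamma_pos_of_pos hy).ne']

lemma DG.log_le_digamma {a : ℝ} (ha : 1 < a) : Real.log (a - 1) ≤ digamma a := by
  have h0 : 0 < a - 1 := by linarith
  have h := DG.slope_le_digamma h0 (by linarith : a - 1 < a)
  have h2 : Real.log (Real.Gamma a) - Real.log (Real.Gamma (a - 1)) = Real.log (a - 1) := by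
    have h3 := DG.log_gamma_add_one h0
    rw [show a - 1 + 1 = a by ring] at h3
    linarith
  rw [h2, show a - (a - 1) = (1:ℝ) by ring, div_one] at h
  exact h

lemma DG.digamma_le_half {a : ℝ} (ha : 0 < a) :
    digamma a ≤ 2 * (Real.log (Real.Gamma (a + 1 / 2)) - Real.log (Real.Gamma a)) := by
  have h := DG.digamma_le_slope ha (by linarith : a < a + 1 / 2)
  rw [show a + 1 / 2 - a = (1:ℝ) / 2 by ring] at h
  calc digamma a ≤ (Real.log (Real.Gamma (a + 1 / 2)) - Real.log (Real.Gamma a)) / (1 / 2) := h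
    _ = 2 * (Real.log (Real.Gamma (a + 1 / 2)) - Real.log (Real.Gamma a)) := by ring

lemma DG.term_ge {x : ℝ} (hx : 0 < x) :
    (1/(x+5/2)+1/(x+7/2)-1/(x+3/2)) - (1/(x+1+5/2)+1/(x+1+7/2)-1/(x+1+3/2))
      ≤ 1/(x+9/4)+1/(x+11/4)-1/(x+9/2)-1/(x+3/2) := by
  have h1 : (0:ℝ) < x + 9/4 := by linarith
  have h2 : (0:ℝ) < x + 11/4 := by linarith
  have h3 : (0:ℝ) < x + 5/2 := by linarith
  have h4 : (0:ℝ) < x + 3/2 := by linarith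
  have h5 : (0:ℝ) < x + 7/2 := by linarith
  have h6 : (0:ℝ) < x + 9/2 := by linarith
  have e : (1/(x+9/4)+1/(x+11/4)-1/(x+9/2)-1/(x+3/2))
      - ((1/(x+5/2)+1/(x+7/2)-1/(x+3/2)) - (1/(x+1+5/2)+1/(x+1+7/2)-1/(x+1+3/2)))
      = (1/8) / ((x+9/4)*((x+11/4)*(x+5/2))) := by
    rw [show x+1+5/2 = x+7/2 by ring, show x+1+7/2 = x+9/2 by ring,
        show x+1+3/2 = x+5/2 by ring]
    field_simp
    ring
  have pos : (0:ℝ) < (1/8) / ((x+9/4)*((x+11/4)*(x+5/2))) := by positivity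
  linarith

lemma DG.far_bound {w : ℝ} (hw : 0 < w) :
    (1/(w+5/2)+1/(w+7/2)-1/(w+3/2)) + ((w+9/4)*(w+9/4))/((w+7/2)*(w+1/2)) - 1 ≤ 2 / w := by
  have h1 : (0:ℝ) < w + 5/2 := by linarith
  have h2 : (0:ℝ) < w + 7/2 := by linarith
  have h3 : (0:ℝ) < w + 3/2 := by linarith
  have h4 : (0:ℝ) < w + 1/2 := by linarith
  have e : 2/w - ((1/(w+5/2)+1/(w+7/2)-1/(w+3/2)) + ((w+9/4)*(w+9/4))/((w+7/2)*(w+1/2)) - 1)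
      = ((1/2)*w^4 + (115/16)*w^3 + (209/8)*w^2 + (2013/64)*w + 105/8)
        / (w*((w+5/2)*((w+7/2)*((w+3/2)*(w+1/2))))) := by
    field_simp
    ring
  have pos : (0:ℝ) < ((1/2)*w^4 + (115/16)*w^3 + (209/8)*w^2 + (2013/64)*w + 105/8)
        / (w*((w+5/2)*((w+7/2)*((w+3/2)*(w+1/2))))) := by positivity
  linarith

lemma DG.main_bound {z : ℝ} (hz : 0 < z) :
    2 / (120 + 9*z) < 1/(z+5/2)+1/(z+7/2)-1/(z+3/2) := by
  have h0 : (0:ℝ) < 120 + 9*z := by linarith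
  have h1 : (0:ℝ) < z + 5/2 := by linarith
  have h2 : (0:ℝ) < z + 7/2 := by linarith
  have h3 : (0:ℝ) < z + 3/2 := by linarith
  have e : (1/(z+5/2)+1/(z+7/2)-1/(z+3/2)) - 2/(120+9*z)
      = (7*z^3 + 132*z^2 + (1307/4)*z + 15/4)
        / ((120+9*z)*((z+3/2)*((z+5/2)*(z+7/2)))) := by
    field_simp
    ring
  have pos : (0:ℝ) < (7*z^3 + 132*z^2 + (1307/4)*z + 15/4)
        / ((120+9*z)*((z+3/2)*((z+5/2)*(z+7/2)))) := by positivity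
  linarith

theorem digamma_combination_pos (z : ℝ) (hz : 0 < z) :
    0 < digamma (z + 9 / 2) + digamma (z + 3 / 2)
        - digamma (z + 9 / 4) - digamma (z + 11 / 4) := by
  set N : ℕ := ⌈(120:ℝ) + 8 * z⌉₊ with hNdef
  have hNz : (120:ℝ) + 8 * z ≤ N := Nat.le_ceil _
  set w : ℝ := z + N with hwdef
  have hwz : 120 + 9 * z ≤ w := by rw [hwdef]; linarith
  have hw0 : 0 < w := by linarith
  -- recurrences
  have r1 := DG.digamma_add_nat (show (0:ℝ) < z + 9/2 by linarith) N
  have r2 := DG.digamma_add_nat (show (0:ℝ) < z + 3/2 by linarith) N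
  have r3 := DG.digamma_add_nat (show (0:ℝ) < z + 9/4 by linarith) N
  have r4 := DG.digamma_add_nat (show (0:ℝ) < z + 11/4 by linarith) N
  rw [show z + 9/2 + (N:ℝ) = w + 9/2 by rw [hwdef]; ring] at r1
  rw [show z + 3/2 + (N:ℝ) = w + 3/2 by rw [hwdef]; ring] at r2
  rw [show z + 9/4 + (N:ℝ) = w + 9/4 by rw [hwdef]; ring] at r3
  rw [show z + 11/4 + (N:ℝ) = w + 11/4 by rw [hwdef]; ring] at r4
  -- far upper bound for the two middle terms
  have u3 := DG.digamma_le_half (show (0:ℝ) < w + 9/4 by linarith)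
  have u4 := DG.digamma_le_half (show (0:ℝ) < w + 11/4 by linarith)
  rw [show w + 9/4 + 1/2 = w + 11/4 by ring] at u3
  rw [show w + 11/4 + 1/2 = w + 13/4 by ring] at u4
  have glog : Real.log (Real.Gamma (w + 13/4))
      = Real.log (w + 9/4) + Real.log (Real.Gamma (w + 9/4)) := by
    have h := DG.log_gamma_add_one (show (0:ℝ) < w + 9/4 by linarith)
    rwa [show w + 9/4 + 1 = w + 13/4 by ring] at h
  have hu : digamma (w + 9/4) + digamma (w + 11/4) ≤ 2 * Real.log (w + 9/4) := by
    linarith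
  -- far lower bounds for the two outer terms
  have l1 : Real.log (w + 7/2) ≤ digamma (w + 9/2) := by
    have h := DG.log_le_digamma (show (1:ℝ) < w + 9/2 by linarith)
    rwa [show w + 9/2 - 1 = w + 7/2 by ring] at h
  have l2 : Real.log (w + 1/2) ≤ digamma (w + 3/2) := by
    have h := DG.log_le_digamma (show (1:ℝ) < w + 3/2 by linarith)
    rwa [show w + 3/2 - 1 = w + 1/2 by ring] at h
  -- logarithm estimate
  have hA : (0:ℝ) < (w + 7/2) * (w + 1/2) := by positivity
  have hB : (0:ℝ) < (w + 9/4) * (w + 9/4) := by positivity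
  have hlog1 : Real.log ((w+7/2)*(w+1/2)) = Real.log (w+7/2) + Real.log (w+1/2) :=
    Real.log_mul (by positivity) (by positivity)
  have hlog2 : Real.log ((w+9/4)*(w+9/4)) = 2 * Real.log (w+9/4) := by
    rw [Real.log_mul (by positivity) (by positivity)]; ring
  have hratio : Real.log ((w+9/4)*(w+9/4)) - Real.log ((w+7/2)*(w+1/2))
      ≤ ((w+9/4)*(w+9/4))/((w+7/2)*(w+1/2)) - 1 := by
    have h := Real.log_le_sub_one_of_pos
      (show (0:ℝ) < ((w+9/4)*(w+9/4))/((w+7/2)*(w+1/2)) by positivity)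
    rwa [Real.log_div hB.ne' hA.ne'] at h
  -- telescoping lower bound for the sum
  have tele := Finset.sum_range_sub'
    (fun k : ℕ => 1/(z+(k:ℝ)+5/2)+1/(z+(k:ℝ)+7/2)-1/(z+(k:ℝ)+3/2)) N
  have tsum : (1/(z+5/2)+1/(z+7/2)-1/(z+3/2)) - (1/(w+5/2)+1/(w+7/2)-1/(w+3/2))
      ≤ ∑ k ∈ Finset.range N,
          (1/(z+9/4+(k:ℝ))+1/(z+11/4+(k:ℝ))-1/(z+9/2+(k:ℝ))-1/(z+3/2+(k:ℝ))) := by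
    have hstep : ∑ k ∈ Finset.range N,
        ((fun k : ℕ => 1/(z+(k:ℝ)+5/2)+1/(z+(k:ℝ)+7/2)-1/(z+(k:ℝ)+3/2)) k
          - (fun k : ℕ => 1/(z+(k:ℝ)+5/2)+1/(z+(k:ℝ)+7/2)-1/(z+(k:ℝ)+3/2)) (k+1))
        ≤ ∑ k ∈ Finset.range N,
          (1/(z+9/4+(k:ℝ))+1/(z+11/4+(k:ℝ))-1/(z+9/2+(k:ℝ))-1/(z+3/2+(k:ℝ))) := by
      apply Finset.sum_le_sum
      intro k _
      have hk := DG.term_ge (show (0:ℝ) < z + (k:ℝ) by positivity)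
      push_cast
      ring_nf
      ring_nf at hk
      linarith
    rw [tele] at hstep
    simp only [Nat.cast_zero, add_zero] at hstep
    rw [hwdef]
    exact hstep
  -- split the sum
  have hsplit : ∑ k ∈ Finset.range N,
        (1/(z+9/4+(k:ℝ))+1/(z+11/4+(k:ℝ))-1/(z+9/2+(k:ℝ))-1/(z+3/2+(k:ℝ)))
      = (∑ k ∈ Finset.range N, 1/(z+9/4+(k:ℝ)))
        + (∑ k ∈ Finset.range N, 1/(z+11/4+(k:ℝ)))
        - (∑ k ∈ Finset.range N, 1/(z+9/2+(k:ℝ)))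
        - (∑ k ∈ Finset.range N, 1/(z+3/2+(k:ℝ))) := by
    rw [Finset.sum_sub_distrib, Finset.sum_sub_distrib, Finset.sum_add_distrib]
  -- final rational estimates
  have hfar := DG.far_bound hw0
  have hmain := DG.main_bound hz
  have hmono : 2 / w ≤ 2 / (120 + 9*z) := by
    apply div_le_div_of_nonneg_left (by norm_num) (by linarith) hwz
  linarith
end

section
/- For d ≥ 1 and α ∈ (0,2], the integral I = ∫_D |x|⁴ / ((1−|x|²)^{−α/2} − 1) dx over the unit ball D in R^d, multiplied by (d+α+2)²/d², equals ((d+2)(d+α+2)²π^{d/2}/(4d)) · Σ_{j=1}^∞ Γ(jα/2 + 1)/Γ(jα/2 + d/2 + 3). -/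
open Real MeasureTheory

lemma my_betaIoo {a b : ℝ} (ha : 0 < a) (hb : 0 < b) :
    ∫ t in Set.Ioo (0:ℝ) 1, t ^ (a - 1) * (1 - t) ^ (b - 1)
      = Real.Gamma a * Real.Gamma b / Real.Gamma (a + b) := by
  have key : Complex.betaIntegral a b
      = ((∫ t in (0:ℝ)..1, t ^ (a - 1) * (1 - t) ^ (b - 1) : ℝ) : ℂ) := by
    rw [Complex.betaIntegral, ← intervalIntegral.integral_ofReal]
    refine intervalIntegral.integral_congr fun x hx => ?_
    rw [Set.uIcc_of_le (by norm_num : (0:ℝ) ≤ 1)] at hx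
    rw [Complex.ofReal_mul, Complex.ofReal_cpow hx.1, Complex.ofReal_cpow (by linarith [hx.2] : (0:ℝ) ≤ 1 - x)]
    push_cast
    ring
  have hgam := Complex.Gamma_mul_Gamma_eq_betaIntegral
    (by simpa using ha : 0 < (a:ℂ).re) (by simpa using hb : 0 < (b:ℂ).re)
  rw [key] at hgam
  have hgam' : Real.Gamma a * Real.Gamma b
      = Real.Gamma (a + b) * ∫ t in (0:ℝ)..1, t ^ (a - 1) * (1 - t) ^ (b - 1) := by
    have := congrArg Complex.re hgam
    simpa [← Complex.ofReal_mul, Complex.Gamma_ofReal, ← Complex.ofReal_add] using this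
  have hint : ∫ t in Set.Ioo (0:ℝ) 1, t ^ (a - 1) * (1 - t) ^ (b - 1)
      = ∫ t in (0:ℝ)..1, t ^ (a - 1) * (1 - t) ^ (b - 1) := by
    rw [intervalIntegral.integral_of_le (by norm_num : (0:ℝ) ≤ 1),
      ← integral_Ioc_eq_integral_Ioo]
  have hpos : Real.Gamma (a + b) ≠ 0 := (Real.Gamma_pos_of_pos (by linarith)).ne'
  rw [hint]
  field_simp
  linarith [hgam']



lemma my_betaIoo' {p q : ℝ} (hp : -1 < p) (hq : -1 < q) :
    ∫ t in Set.Ioo (0:ℝ) 1, t ^ p * (1 - t) ^ q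
      = Real.Gamma (p + 1) * Real.Gamma (q + 1) / Real.Gamma (p + q + 2) := by
  have := my_betaIoo (a := p + 1) (b := q + 1) (by linarith) (by linarith)
  simpa [add_sub_cancel_right, show p + 1 + (q + 1) = p + q + 2 by ring] using this

lemma my_geom {α t : ℝ} (hα : 0 < α) (ht : t ∈ Set.Ioo (0:ℝ) 1) :
    ∑' j : ℕ, (1 - t) ^ (((j:ℝ) + 1) * α / 2) = 1 / ((1 - t) ^ (-(α / 2)) - 1) := by
  obtain ⟨ht0, ht1⟩ := ht
  set q : ℝ := (1 - t) ^ (α / 2) with hq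
  have h1t : 0 < 1 - t := by linarith
  have hq0 : 0 < q := Real.rpow_pos_of_pos h1t _
  have hq1 : q < 1 := by
    rw [hq]
    exact Real.rpow_lt_one (by linarith) (by linarith) (by linarith)
  have hterm : ∀ j : ℕ, (1 - t) ^ (((j:ℝ) + 1) * α / 2) = q ^ (j + 1) := by
    intro j
    rw [hq, ← Real.rpow_natCast ((1 - t) ^ (α / 2)) (j + 1), ← Real.rpow_mul h1t.le]
    push_cast
    ring_nf
  simp_rw [hterm]
  have hgeo : ∑' j : ℕ, q ^ (j + 1) = q * (1 - q)⁻¹ := by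
    simp_rw [pow_succ']
    rw [tsum_mul_left, tsum_geometric_of_lt_one hq0.le hq1]
  rw [hgeo, Real.rpow_neg h1t.le]
  rw [show (1 - t) ^ (α / 2) = q from rfl]
  rw [eq_div_iff (by
    intro h
    have : q⁻¹ = 1 := by linarith
    rw [inv_eq_one] at this
    linarith)]
  field_simp
  exact div_self (ne_of_gt (by linarith : (0:ℝ) < 1 - q))

lemma my_integrableOn {p q : ℝ} (hp : 0 ≤ p) (hq : 0 ≤ q) :
    IntegrableOn (fun t : ℝ => t ^ p * (1 - t) ^ q) (Set.Ioo 0 1) := by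
  apply Measure.integrableOn_of_bounded (M := 1) measure_Ioo_lt_top.ne
  · exact (by fun_prop : Measurable (fun t : ℝ => t ^ p * (1 - t) ^ q)).aestronglyMeasurable
  · filter_upwards [ae_restrict_mem measurableSet_Ioo] with t ht
    obtain ⟨ht0, ht1⟩ := ht
    rw [Real.norm_of_nonneg (mul_nonneg (Real.rpow_nonneg ht0.le _)
      (Real.rpow_nonneg (by linarith) _))]
    have h1 : t ^ p ≤ 1 := Real.rpow_le_one ht0.le ht1.le hp
    have h2 : (1 - t) ^ q ≤ 1 := Real.rpow_le_one (by linarith) (by linarith) hq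
    nlinarith [Real.rpow_nonneg ht0.le p, Real.rpow_nonneg (by linarith : (0:ℝ) ≤ 1 - t) q]

lemma my_gamma_ratio {x : ℝ} (hx : 0 < x) :
    Real.Gamma (x + 1) / Real.Gamma (x + 3) = 1 / ((x + 1) * (x + 2)) := by
  have h2 : Real.Gamma (x + 3) = (x + 2) * ((x + 1) * Real.Gamma (x + 1)) := by
    rw [show x + 3 = (x + 2) + 1 by ring, Real.Gamma_add_one (by linarith),
      show x + 2 = (x + 1) + 1 by ring, Real.Gamma_add_one (by linarith)]
  have hΓ : 0 < Real.Gamma (x + 1) := Real.Gamma_pos_of_pos (by linarith)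
  rw [h2]
  field_simp

lemma my_summable (d : ℕ) {α : ℝ} (hα : 0 < α) :
    Summable (fun j : ℕ => Real.Gamma (((j:ℝ) + 1) * α / 2 + 1) /
      Real.Gamma (((j:ℝ) + 1) * α / 2 + (d:ℝ) / 2 + 3)) := by
  have hbase : Summable (fun j : ℕ => (4 / α ^ 2) * (1 / ((j:ℝ) + 1) ^ 2)) := by
    apply Summable.mul_left
    have h0 : Summable (fun n : ℕ => 1 / (n:ℝ) ^ 2) :=
      Real.summable_one_div_nat_pow.mpr one_lt_two
    have := (summable_nat_add_iff 1).mpr h0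
    simpa using this
  apply Summable.of_nonneg_of_le _ _ hbase
  · intro j
    have h1 : 0 < ((j:ℝ) + 1) * α / 2 + 1 := by positivity
    have h2 : (0:ℝ) < ((j:ℝ) + 1) * α / 2 + (d:ℝ) / 2 + 3 := by positivity
    exact div_nonneg (Real.Gamma_pos_of_pos h1).le (Real.Gamma_pos_of_pos h2).le
  · intro j
    set a : ℝ := ((j:ℝ) + 1) * α / 2 with ha
    have ha0 : 0 < a := by positivity
    have hmono : Real.Gamma (a + 3) ≤ Real.Gamma (a + (d:ℝ) / 2 + 3) := by
      rcases eq_or_lt_of_le (by positivity : (0:ℝ) ≤ (d:ℝ) / 2) with h | h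
      · rw [← h]; simp
      · exact le_of_lt (Real.Gamma_strictMonoOn_Ici (by simp [Set.mem_Ici]; linarith)
          (by simp [Set.mem_Ici]; linarith) (by linarith))
    calc Real.Gamma (a + 1) / Real.Gamma (a + (d:ℝ) / 2 + 3)
        ≤ Real.Gamma (a + 1) / Real.Gamma (a + 3) := by
          gcongr
          all_goals first
            | exact (Real.Gamma_pos_of_pos (by linarith)).le
            | exact Real.Gamma_pos_of_pos (by linarith)
            | exact hmono
      _ = 1 / ((a + 1) * (a + 2)) := my_gamma_ratio ha0
      _ ≤ 4 / α ^ 2 * (1 / ((j:ℝ) + 1) ^ 2) := by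
          rw [div_mul_div_comm, mul_one,
            div_le_div_iff₀ (by positivity) (by positivity)]
          have key : 4 * a ^ 2 = α ^ 2 * ((j:ℝ) + 1) ^ 2 := by rw [ha]; ring
          nlinarith [key, ha0]


lemma my_subst (d : ℕ) (h : ℝ → ℝ) :
    ∫ t in Set.Ioo (0:ℝ) 1, t ^ ((d:ℝ) / 2 + 1) * h t
      = 2 * ∫ y in Set.Ioo (0:ℝ) 1, y ^ (d + 3) * h (y ^ 2) := by
  have himg : (fun x : ℝ => x ^ 2) '' Set.Ioo 0 1 = Set.Ioo 0 1 := by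
    ext y
    constructor
    · rintro ⟨x, ⟨hx0, hx1⟩, rfl⟩
      refine ⟨by positivity, ?_⟩
      show x ^ 2 < 1
      nlinarith
    · rintro ⟨hy0, hy1⟩
      exact ⟨Real.sqrt y, ⟨Real.sqrt_pos.mpr hy0,
        (Real.sqrt_lt' one_pos).mpr (by simpa using hy1)⟩, Real.sq_sqrt hy0.le⟩
  have hderiv : ∀ x ∈ Set.Ioo (0:ℝ) 1, HasDerivWithinAt (fun x : ℝ => x ^ 2) (2 * x)
      (Set.Ioo 0 1) x := by
    intro x _
    simpa using (hasDerivAt_pow 2 x).hasDerivWithinAt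
  have hinj : Set.InjOn (fun x : ℝ => x ^ 2) (Set.Ioo 0 1) := by
    intro a ha b hb hab
    simp only at hab
    nlinarith [ha.1, hb.1]
  have := integral_image_eq_integral_abs_deriv_smul measurableSet_Ioo hderiv hinj
    (fun t => t ^ ((d:ℝ) / 2 + 1) * h t)
  rw [himg] at this
  rw [this, ← smul_eq_mul, ← integral_smul]
  refine setIntegral_congr_fun measurableSet_Ioo fun x hx => ?_
  obtain ⟨hx0, hx1⟩ := hx
  have hxpow : ((x ^ 2 : ℝ)) ^ ((d:ℝ) / 2 + 1) = x ^ (d + 2) := by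
    rw [← Real.rpow_natCast x 2, ← Real.rpow_mul hx0.le,
      show ((2:ℕ):ℝ) * ((d:ℝ) / 2 + 1) = ((d:ℕ):ℝ) + 2 by push_cast; ring]
    rw [show ((d:ℕ):ℝ) + 2 = (((d + 2 : ℕ)):ℝ) by push_cast; ring, Real.rpow_natCast]
  simp only [smul_eq_mul]
  rw [abs_of_pos (by linarith), hxpow]
  ring

lemma my_interchange (d : ℕ) {α : ℝ} (hα : 0 < α) :
    ∫ t in Set.Ioo (0:ℝ) 1, t ^ ((d:ℝ) / 2 + 1) * (1 / ((1 - t) ^ (-(α / 2)) - 1))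
      = Real.Gamma ((d:ℝ) / 2 + 2) * ∑' j : ℕ, Real.Gamma (((j:ℝ) + 1) * α / 2 + 1) /
          Real.Gamma (((j:ℝ) + 1) * α / 2 + (d:ℝ) / 2 + 3) := by
  set F : ℕ → ℝ → ℝ := fun j t => t ^ ((d:ℝ) / 2 + 1) * (1 - t) ^ (((j:ℝ) + 1) * α / 2) with hF
  have hFint : ∀ j : ℕ, ∫ t in Set.Ioo (0:ℝ) 1, F j t
      = Real.Gamma ((d:ℝ) / 2 + 2) * (Real.Gamma (((j:ℝ) + 1) * α / 2 + 1) /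
          Real.Gamma (((j:ℝ) + 1) * α / 2 + (d:ℝ) / 2 + 3)) := by
    intro j
    rw [hF]
    rw [my_betaIoo' (by have : (0:ℝ) ≤ (d:ℝ) := Nat.cast_nonneg d; linarith : (-1:ℝ) < (d:ℝ)/2+1)
      (by
        have h : (0:ℝ) < ((j:ℝ)+1)*α/2 := by positivity
        linarith : (-1:ℝ) < ((j:ℝ)+1)*α/2)]
    rw [show (d:ℝ)/2 + 1 + 1 = (d:ℝ)/2 + 2 by ring,
      show (d:ℝ)/2 + 1 + (((j:ℝ)+1)*α/2) + 2 = ((j:ℝ)+1)*α/2 + (d:ℝ)/2 + 3 by ring,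
      mul_div_assoc]
  have h1 : ∫ t in Set.Ioo (0:ℝ) 1, t ^ ((d:ℝ) / 2 + 1) * (1 / ((1 - t) ^ (-(α / 2)) - 1))
      = ∫ t in Set.Ioo (0:ℝ) 1, ∑' j : ℕ, F j t := by
    refine setIntegral_congr_fun measurableSet_Ioo fun t ht => ?_
    rw [← my_geom hα ht, ← tsum_mul_left]
  rw [h1, ← integral_tsum_of_summable_integral_norm]
  · simp_rw [hFint]
    rw [tsum_mul_left]
  · intro j
    exact my_integrableOn (by positivity) (by positivity)
  · have heq : ∀ j : ℕ, ∫ t in Set.Ioo (0:ℝ) 1, ‖F j t‖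
        = Real.Gamma ((d:ℝ) / 2 + 2) * (Real.Gamma (((j:ℝ) + 1) * α / 2 + 1) /
          Real.Gamma (((j:ℝ) + 1) * α / 2 + (d:ℝ) / 2 + 3)) := by
      intro j
      rw [← hFint j]
      refine setIntegral_congr_fun measurableSet_Ioo fun t ht => ?_
      exact Real.norm_of_nonneg (mul_nonneg (Real.rpow_nonneg ht.1.le _)
        (Real.rpow_nonneg (by linarith [ht.2]) _))
    simp_rw [heq]
    exact (my_summable d hα).mul_left _

theorem integral_I_series (d : ℕ) (hd : 1 ≤ d) (α : ℝ) (hα : α ∈ Set.Ioc (0 : ℝ) 2) :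
    ((d + α + 2) ^ 2 / (d : ℝ) ^ 2) *
        ∫ x in Metric.ball (0 : EuclideanSpace ℝ (Fin d)) 1,
          ‖x‖ ^ 4 / ((1 - ‖x‖ ^ 2) ^ (-(α / 2)) - 1)
      = ((d + 2) * (d + α + 2) ^ 2 * π ^ ((d : ℝ) / 2) / (4 * d)) *
          ∑' j : ℕ, Real.Gamma ((j + 1) * α / 2 + 1) /
            Real.Gamma ((j + 1) * α / 2 + (d : ℝ) / 2 + 3) := by
  obtain ⟨hα0, hα2⟩ := hα
  haveI : Nonempty (Fin d) := Fin.pos_iff_nonempty.mp hd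
  haveI : Nontrivial (EuclideanSpace ℝ (Fin d)) := inferInstance
  have hd0 : (0:ℝ) < d := by exact_mod_cast hd
  set f : ℝ → ℝ := fun r => r ^ 4 / ((1 - r ^ 2) ^ (-(α / 2)) - 1) with hf
  set S : ℝ := ∑' j : ℕ, Real.Gamma (((j:ℝ) + 1) * α / 2 + 1) /
      Real.Gamma (((j:ℝ) + 1) * α / 2 + (d : ℝ) / 2 + 3) with hS
  have h1 : (∫ x in Metric.ball (0 : EuclideanSpace ℝ (Fin d)) 1,
        ‖x‖ ^ 4 / ((1 - ‖x‖ ^ 2) ^ (-(α / 2)) - 1))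
      = ∫ x : EuclideanSpace ℝ (Fin d), (Set.Iio (1:ℝ)).indicator f ‖x‖ := by
    rw [← integral_indicator measurableSet_ball]
    refine integral_congr_ae (Filter.Eventually.of_forall fun x => ?_)
    by_cases hx : ‖x‖ < 1 <;>
      simp [Set.indicator_apply, mem_ball_zero_iff, hx, hf]
  have h2 := integral_fun_norm_addHaar (volume : Measure (EuclideanSpace ℝ (Fin d)))
    ((Set.Iio (1:ℝ)).indicator f)
  rw [finrank_euclideanSpace_fin] at h2
  have h3 : (∫ y in Set.Ioi (0:ℝ), y ^ (d - 1) • (Set.Iio (1:ℝ)).indicator f y)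
      = ∫ y in Set.Ioo (0:ℝ) 1, y ^ (d + 3) * (1 / ((1 - y ^ 2) ^ (-(α / 2)) - 1)) := by
    have e1 : ∀ y : ℝ, y ^ (d - 1) • ((Set.Iio (1:ℝ)).indicator f y)
        = (Set.Iio (1:ℝ)).indicator (fun y => y ^ (d - 1) * f y) y := by
      intro y
      by_cases hy : y ∈ Set.Iio (1:ℝ) <;> simp [Set.indicator_apply, hy]
    simp_rw [e1]
    rw [setIntegral_indicator measurableSet_Iio, Set.Ioi_inter_Iio]
    refine setIntegral_congr_fun measurableSet_Ioo fun y hy => ?_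
    rw [hf]
    simp only []
    rw [div_eq_mul_inv, one_div, ← mul_assoc, ← pow_add,
      show d - 1 + 4 = d + 3 by omega]
  have h4 := my_subst d (fun t => 1 / ((1 - t) ^ (-(α / 2)) - 1))
  have h5 := my_interchange d hα0
  have hV : (volume (Metric.ball (0 : EuclideanSpace ℝ (Fin d)) 1)).toReal
      = π ^ ((d:ℝ) / 2) / Real.Gamma ((d:ℝ) / 2 + 1) := by
    rw [EuclideanSpace.volume_ball]
    simp only [Fintype.card_fin, ENNReal.ofReal_one, one_pow, one_mul]
    rw [ENNReal.toReal_ofReal (by positivity)]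
    congr 1
    rw [Real.sqrt_eq_rpow, ← Real.rpow_natCast (π ^ ((1:ℝ)/2)) d, ← Real.rpow_mul pi_pos.le]
    congr 1
    ring
  have hΓpos : 0 < Real.Gamma ((d:ℝ) / 2 + 1) := Real.Gamma_pos_of_pos (by positivity)
  have hΓ2 : Real.Gamma ((d:ℝ) / 2 + 2) = ((d:ℝ) / 2 + 1) * Real.Gamma ((d:ℝ) / 2 + 1) := by
    rw [show (d:ℝ) / 2 + 2 = ((d:ℝ) / 2 + 1) + 1 by ring,
      Real.Gamma_add_one (by positivity)]
  rw [h1, h2, h3, measureReal_def, hV, nsmul_eq_mul, smul_eq_mul]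
  rw [show (∫ y in Set.Ioo (0:ℝ) 1, y ^ (d + 3) * (1 / ((1 - y ^ 2) ^ (-(α / 2)) - 1)))
      = (1/2) * ∫ t in Set.Ioo (0:ℝ) 1, t ^ ((d:ℝ) / 2 + 1) *
        (1 / ((1 - t) ^ (-(α / 2)) - 1)) by rw [h4]; ring]
  rw [h5, hΓ2, ← hS]
  field_simp
  ring
end

section
/- For d ≥ 1 and α ∈ (0,2], the following strict inequality holds: (d+2)(d+α+2)² π^{d/2} Γ(α/2+1) / (4d Γ((d+α)/2 + 3)) < ((d+α+2)² π^{d/2} / (d² Γ(d/2))) ∫_0^1 t^{α/2}(1−t)^{d/2+1}/(1−t^{α/2}) dt. -/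
open Real MeasureTheory intervalIntegral

lemma real_beta {a b : ℝ} (ha : 0 < a) (hb : 0 < b) :
    ∫ t in (0:ℝ)..1, t ^ (a - 1) * (1 - t) ^ (b - 1)
      = Real.Gamma a * Real.Gamma b / Real.Gamma (a + b) := by
  have key := Complex.Gamma_mul_Gamma_eq_betaIntegral (s := (a : ℂ)) (t := (b : ℂ))
    (by simpa using ha) (by simpa using hb)
  have hI : Complex.betaIntegral (a : ℂ) (b : ℂ)
      = ((∫ t in (0:ℝ)..1, t ^ (a - 1) * (1 - t) ^ (b - 1) : ℝ) : ℂ) := by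
    rw [Complex.betaIntegral, ← intervalIntegral.integral_ofReal]
    refine intervalIntegral.integral_congr fun x hx => ?_
    rw [Set.uIcc_of_le (by norm_num)] at hx
    rw [Complex.ofReal_mul, Complex.ofReal_cpow hx.1,
      Complex.ofReal_cpow (by linarith [hx.2] : (0:ℝ) ≤ 1 - x)]
    push_cast
    ring
  rw [hI, show ((a:ℂ) + b) = ((a + b : ℝ) : ℂ) by push_cast; ring,
    Complex.Gamma_ofReal, Complex.Gamma_ofReal, Complex.Gamma_ofReal] at key
  have key' : Real.Gamma a * Real.Gamma b
      = Real.Gamma (a + b) * ∫ t in (0:ℝ)..1, t ^ (a - 1) * (1 - t) ^ (b - 1) := by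
    exact_mod_cast key
  have hne : Real.Gamma (a + b) ≠ 0 := (Real.Gamma_pos_of_pos (by linarith)).ne'
  field_simp
  linarith [key']

theorem sigma_sum_lt_I (d : ℕ) (hd : 1 ≤ d) (α : ℝ) (hα : α ∈ Set.Ioc (0 : ℝ) 2) :
    (d + 2) * (d + α + 2) ^ 2 * π ^ ((d : ℝ) / 2) * Real.Gamma (α / 2 + 1) /
        (4 * d * Real.Gamma ((d + α) / 2 + 3))
      < ((d + α + 2) ^ 2 * π ^ ((d : ℝ) / 2) / ((d : ℝ) ^ 2 * Real.Gamma ((d : ℝ) / 2))) *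
          ∫ t in (0 : ℝ)..1, t ^ (α / 2) * (1 - t) ^ ((d : ℝ) / 2 + 1) / (1 - t ^ (α / 2)) := by
  obtain ⟨hα0, hα2⟩ := hα
  set p : ℝ := α / 2 with hp_def
  have hp : 0 < p := by positivity
  have hp1 : p ≤ 1 := by simp only [hp_def]; linarith
  have hd1 : (1 : ℝ) ≤ (d : ℝ) := by exact_mod_cast hd
  set q : ℝ := (d : ℝ) / 2 + 1 with hq_def
  have hq : 0 < q := by positivity
  -- continuity facts
  have cont_tp : Continuous fun t : ℝ => t ^ p :=
    continuous_iff_continuousAt.2 fun x => Real.continuousAt_rpow_const x p (Or.inr hp.le)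
  have cont_q : Continuous fun t : ℝ => (1 - t) ^ q :=
    (continuous_const.sub continuous_id).rpow_const fun x => Or.inr hq.le
  have cont_d2 : Continuous fun t : ℝ => (1 - t) ^ ((d : ℝ) / 2) :=
    (continuous_const.sub continuous_id).rpow_const fun x => Or.inr (by positivity)
  set g : ℝ → ℝ := fun t => t ^ p * (1 - t) ^ q with hg_def
  set f : ℝ → ℝ := fun t => t ^ p * (1 - t) ^ q / (1 - t ^ p) with hf_def
  have cont_g : Continuous g := cont_tp.mul cont_q
  have hg_int : IntervalIntegrable g volume 0 1 := cont_g.intervalIntegrable _ _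
  have hg2_int : IntervalIntegrable (fun t => g t * t ^ p) volume 0 1 :=
    (cont_g.mul cont_tp).intervalIntegrable _ _
  -- the key Bernoulli bound: 1 - t^p ≥ p * (1 - t) for t ∈ [0,1]
  have bern : ∀ t : ℝ, 0 ≤ t → t ≤ 1 → p * (1 - t) ≤ 1 - t ^ p := by
    intro t ht0 ht1
    have := rpow_one_add_le_one_add_mul_self (s := t - 1) (by linarith) hp.le hp1
    rw [show (1 : ℝ) + (t - 1) = t by ring] at this
    nlinarith
  -- integrability of f
  have hf_int : IntervalIntegrable f volume 0 1 := by
    rw [intervalIntegrable_iff, Set.uIoc_of_le (by norm_num : (0:ℝ) ≤ 1)]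
    refine MeasureTheory.Integrable.mono'
      (g := fun t => (1 / p) * (1 - t) ^ ((d : ℝ) / 2))
      ((continuous_const.mul cont_d2).integrableOn_Ioc) ?_ ?_
    · exact ((cont_g.measurable.div (measurable_const.sub cont_tp.measurable))).aestronglyMeasurable
    · rw [ae_restrict_iff' measurableSet_Ioc]
      refine Filter.Eventually.of_forall fun t ht => ?_
      obtain ⟨ht0, ht1⟩ := ht
      rcases eq_or_lt_of_le ht1 with rfl | htlt
      · simp only [hf_def, sub_self, Real.zero_rpow hq.ne', mul_zero, zero_div, norm_zero,
          Real.zero_rpow (by positivity : (d:ℝ)/2 ≠ 0), mul_zero]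
        exact le_refl 0
      · have h1t : 0 < 1 - t := by linarith
        have hD : 0 < 1 - t ^ p := lt_of_lt_of_le (by positivity) (bern t ht0.le ht1)
        have htp1 : t ^ p ≤ 1 := Real.rpow_le_one ht0.le ht1 hp.le
        have htp0 : 0 ≤ t ^ p := Real.rpow_nonneg ht0.le p
        have hA : (0:ℝ) ≤ (1 - t) ^ ((d : ℝ) / 2) := Real.rpow_nonneg h1t.le _
        have hqA : (1 - t) ^ q = (1 - t) ^ ((d : ℝ) / 2) * (1 - t) := by
          rw [hq_def, Real.rpow_add h1t, Real.rpow_one]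
        have hfnn : 0 ≤ f t := by
          simp only [hf_def]
          positivity
        rw [Real.norm_of_nonneg hfnn]
        simp only [hf_def]
        rw [div_le_iff₀ hD, hqA]
        have h1 : t ^ p * ((1 - t) ^ ((d:ℝ)/2) * (1 - t)) ≤ (1 - t) ^ ((d:ℝ)/2) * (1 - t) := by
          nlinarith [mul_nonneg hA h1t.le]
        have h2 : (1 - t) ^ ((d:ℝ)/2) * (1 - t)
            ≤ 1 / p * (1 - t) ^ ((d:ℝ)/2) * (1 - t ^ p) := by
          have := bern t ht0.le ht1
          rw [div_mul_eq_mul_div, div_mul_eq_mul_div, le_div_iff₀ hp]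
          nlinarith
        linarith
  -- pointwise: g t * (1 + t^p) ≤ f t on [0,1]
  have hmono : ∀ t ∈ Set.Icc (0:ℝ) 1, g t + g t * t ^ p ≤ f t := by
    intro t ht
    obtain ⟨ht0, ht1⟩ := ht
    rcases eq_or_lt_of_le ht1 with rfl | htlt
    · simp [hf_def, hg_def, Real.zero_rpow hq.ne']
    · have hD : 0 < 1 - t ^ p := by
        have : t ^ p < 1 := Real.rpow_lt_one ht0 htlt hp
        linarith
      have htp0 : 0 ≤ t ^ p := Real.rpow_nonneg ht0 p
      have hgnn : 0 ≤ g t := by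
        simp only [hg_def]
        have : (0:ℝ) ≤ 1 - t := by linarith
        positivity
      simp only [hf_def, hg_def] at *
      rw [le_div_iff₀ hD]
      nlinarith [mul_nonneg (mul_nonneg hgnn htp0) htp0]
  have hsum_int : IntervalIntegrable (fun t => g t + g t * t ^ p) volume 0 1 :=
    hg_int.add hg2_int
  have step1 : (∫ t in (0:ℝ)..1, g t + g t * t ^ p) ≤ ∫ t in (0:ℝ)..1, f t :=
    intervalIntegral.integral_mono_on (by norm_num) hsum_int hf_int hmono
  have step2 : (∫ t in (0:ℝ)..1, g t + g t * t ^ p)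
      = (∫ t in (0:ℝ)..1, g t) + ∫ t in (0:ℝ)..1, g t * t ^ p :=
    intervalIntegral.integral_add hg_int hg2_int
  have step3 : 0 < ∫ t in (0:ℝ)..1, g t * t ^ p := by
    refine intervalIntegral_pos_of_pos_on hg2_int (fun x hx => ?_) (by norm_num)
    obtain ⟨hx0, hx1⟩ := hx
    have : (0:ℝ) < 1 - x := by linarith
    simp only [hg_def]
    positivity
  have hgf : (∫ t in (0:ℝ)..1, g t) < ∫ t in (0:ℝ)..1, f t := by linarith
  -- the beta value of ∫ g
  have hbeta : (∫ t in (0:ℝ)..1, g t)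
      = Real.Gamma (p + 1) * Real.Gamma ((d:ℝ)/2 + 2) / Real.Gamma ((p + 1) + ((d:ℝ)/2 + 2)) := by
    have := real_beta (a := p + 1) (b := (d:ℝ)/2 + 2) (by linarith) (by linarith)
    rw [show p + 1 - 1 = p from add_sub_cancel_right p 1,
      show (d:ℝ)/2 + 2 - 1 = (d:ℝ)/2 + 1 by ring] at this
    exact this
  -- positivity of coefficient
  have hΓd : 0 < Real.Gamma ((d:ℝ)/2) := Real.Gamma_pos_of_pos (by positivity)
  have hd0 : (0:ℝ) < (d:ℝ) := by linarith
  have hC : 0 < ((d:ℝ) + α + 2) ^ 2 * π ^ ((d : ℝ) / 2) / ((d : ℝ) ^ 2 * Real.Gamma ((d:ℝ)/2)) := by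
    have hπ : (0:ℝ) < π ^ ((d:ℝ)/2) := Real.rpow_pos_of_pos Real.pi_pos _
    have : (0:ℝ) < (d:ℝ) + α + 2 := by linarith
    positivity
  -- LHS equals coefficient * beta value
  have hS : ((d:ℝ) + α) / 2 + 3 = (p + 1) + ((d:ℝ)/2 + 2) := by
    simp only [hp_def]; ring
  have hΓS : 0 < Real.Gamma ((p + 1) + ((d:ℝ)/2 + 2)) := Real.Gamma_pos_of_pos (by linarith)
  have hΓ2 : Real.Gamma ((d:ℝ)/2 + 2) = ((d:ℝ)/2 + 1) * ((d:ℝ)/2) * Real.Gamma ((d:ℝ)/2) := by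
    rw [show (d:ℝ)/2 + 2 = ((d:ℝ)/2 + 1) + 1 by ring,
      Real.Gamma_add_one (by positivity), Real.Gamma_add_one (by positivity)]
    ring
  have hLHS : (d + 2) * ((d:ℝ) + α + 2) ^ 2 * π ^ ((d : ℝ) / 2) * Real.Gamma (α / 2 + 1) /
        (4 * d * Real.Gamma (((d:ℝ) + α) / 2 + 3))
      = (((d:ℝ) + α + 2) ^ 2 * π ^ ((d : ℝ) / 2) / ((d : ℝ) ^ 2 * Real.Gamma ((d:ℝ)/2))) *
        (Real.Gamma (p + 1) * Real.Gamma ((d:ℝ)/2 + 2) /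
          Real.Gamma ((p + 1) + ((d:ℝ)/2 + 2))) := by
    rw [hS, hΓ2, hp_def]
    field_simp
    ring
  calc (d + 2) * ((d:ℝ) + α + 2) ^ 2 * π ^ ((d : ℝ) / 2) * Real.Gamma (α / 2 + 1) /
        (4 * d * Real.Gamma (((d:ℝ) + α) / 2 + 3))
      = (((d:ℝ) + α + 2) ^ 2 * π ^ ((d : ℝ) / 2) / ((d : ℝ) ^ 2 * Real.Gamma ((d:ℝ)/2))) *
        ∫ t in (0:ℝ)..1, g t := by rw [hLHS, hbeta]
    _ < (((d:ℝ) + α + 2) ^ 2 * π ^ ((d : ℝ) / 2) / ((d : ℝ) ^ 2 * Real.Gamma ((d:ℝ)/2))) *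
        ∫ t in (0:ℝ)..1, f t := by
        exact mul_lt_mul_of_pos_left hgf hC
    _ = _ := rfl
end

section
/- For integers 1 ≤ d ≤ 9, (15√π/8)·Γ((d+5)/2)/Γ((d+4)/2) > (3π/16)(d+5), and for d ≥ 10 this inequality fails. -/
set_option maxHeartbeats 1000000

open Real

private lemma gamma_half_vals :
    Real.Gamma (3/2) = 1/2 * Real.sqrt π ∧
    Real.Gamma (5/2) = 3/4 * Real.sqrt π ∧
    Real.Gamma (7/2) = 15/8 * Real.sqrt π ∧
    Real.Gamma (9/2) = 105/16 * Real.sqrt π ∧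
    Real.Gamma (11/2) = 945/32 * Real.sqrt π ∧
    Real.Gamma (13/2) = 10395/64 * Real.sqrt π := by
  have h0 : Real.Gamma (1/2) = Real.sqrt π := Real.Gamma_one_half_eq
  have h1 : Real.Gamma (3/2) = 1/2 * Real.sqrt π := by
    have := Real.Gamma_add_one (s := 1/2) (by norm_num)
    norm_num at this; rw [show (3:ℝ)/2 = 1/2 + 1 by norm_num,
      Real.Gamma_add_one (by norm_num), h0]
  have h2 : Real.Gamma (5/2) = 3/4 * Real.sqrt π := by
    rw [show (5:ℝ)/2 = 3/2 + 1 by norm_num, Real.Gamma_add_one (by norm_num), h1]; ring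
  have h3 : Real.Gamma (7/2) = 15/8 * Real.sqrt π := by
    rw [show (7:ℝ)/2 = 5/2 + 1 by norm_num, Real.Gamma_add_one (by norm_num), h2]; ring
  have h4 : Real.Gamma (9/2) = 105/16 * Real.sqrt π := by
    rw [show (9:ℝ)/2 = 7/2 + 1 by norm_num, Real.Gamma_add_one (by norm_num), h3]; ring
  have h5 : Real.Gamma (11/2) = 945/32 * Real.sqrt π := by
    rw [show (11:ℝ)/2 = 9/2 + 1 by norm_num, Real.Gamma_add_one (by norm_num), h4]; ring
  have h6 : Real.Gamma (13/2) = 10395/64 * Real.sqrt π := by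
    rw [show (13:ℝ)/2 = 11/2 + 1 by norm_num, Real.Gamma_add_one (by norm_num), h5]; ring
  exact ⟨h1, h2, h3, h4, h5, h6⟩

private lemma gamma_nat_vals :
    Real.Gamma 3 = 2 ∧ Real.Gamma 4 = 6 ∧ Real.Gamma 5 = 24 ∧
    Real.Gamma 6 = 120 ∧ Real.Gamma 7 = 720 := by
  have h1 : Real.Gamma 1 = 1 := Real.Gamma_one
  have h2 : Real.Gamma 2 = 1 := by
    rw [show (2:ℝ) = 1 + 1 by norm_num, Real.Gamma_add_one one_ne_zero, h1]; ring
  have h3 : Real.Gamma 3 = 2 := by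
    rw [show (3:ℝ) = 2 + 1 by norm_num, Real.Gamma_add_one two_ne_zero, h2]; ring
  have h4 : Real.Gamma 4 = 6 := by
    rw [show (4:ℝ) = 3 + 1 by norm_num, Real.Gamma_add_one (by norm_num), h3]; ring
  have h5 : Real.Gamma 5 = 24 := by
    rw [show (5:ℝ) = 4 + 1 by norm_num, Real.Gamma_add_one (by norm_num), h4]; ring
  have h6 : Real.Gamma 6 = 120 := by
    rw [show (6:ℝ) = 5 + 1 by norm_num, Real.Gamma_add_one (by norm_num), h5]; ring
  have h7 : Real.Gamma 7 = 720 := by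
    rw [show (7:ℝ) = 6 + 1 by norm_num, Real.Gamma_add_one (by norm_num), h6]; ring
  exact ⟨h3, h4, h5, h6, h7⟩

/-- Wendel's inequality: Γ(x + 1/2) ≤ √x · Γ(x) for x > 0. -/
private lemma wendel {x : ℝ} (hx : 0 < x) :
    Real.Gamma (x + 1/2) ≤ Real.sqrt x * Real.Gamma x := by
  have hgx : 0 < Real.Gamma x := Real.Gamma_pos_of_pos hx
  have hgx1 : 0 < Real.Gamma (x + 1) := Real.Gamma_pos_of_pos (by linarith)
  have hgh : 0 < Real.Gamma (x + 1/2) := Real.Gamma_pos_of_pos (by linarith)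
  have hconv := Real.convexOn_log_Gamma.2 (Set.mem_Ioi.mpr hx)
    (Set.mem_Ioi.mpr (show (0:ℝ) < x + 1 by linarith))
    (by norm_num : (0:ℝ) ≤ 1/2) (by norm_num : (0:ℝ) ≤ 1/2) (by norm_num)
  simp only [smul_eq_mul, Function.comp_apply] at hconv
  have heq : (1/2 : ℝ) * x + 1/2 * (x + 1) = x + 1/2 := by ring
  rw [heq] at hconv
  have hsq : Real.Gamma (x + 1/2) ^ 2 ≤ x * Real.Gamma x ^ 2 := by
    have hlog : Real.log (Real.Gamma (x + 1/2) ^ 2) ≤ Real.log (x * Real.Gamma x ^ 2) := by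
      rw [Real.log_pow, Real.log_mul hx.ne' (by positivity), Real.log_pow]
      have hga : Real.Gamma (x + 1) = x * Real.Gamma x := Real.Gamma_add_one hx.ne'
      rw [hga, Real.log_mul hx.ne' hgx.ne'] at hconv
      push_cast
      linarith
    exact (Real.log_le_log_iff (by positivity) (by positivity)).mp hlog
  calc Real.Gamma (x + 1/2) = Real.sqrt (Real.Gamma (x + 1/2) ^ 2) :=
        (Real.sqrt_sq hgh.le).symm
    _ ≤ Real.sqrt (x * Real.Gamma x ^ 2) := Real.sqrt_le_sqrt hsq
    _ = Real.sqrt x * Real.Gamma x := by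
        rw [Real.sqrt_mul hx.le, Real.sqrt_sq hgx.le]

theorem mu_two_vs_bound :
    (∀ d : ℕ, 1 ≤ d → d ≤ 9 →
      (15 * Real.sqrt π / 8) * Real.Gamma (((d : ℝ) + 5) / 2) / Real.Gamma (((d : ℝ) + 4) / 2)
        > (3 * π / 16) * ((d : ℝ) + 5)) ∧
    (∀ d : ℕ, 10 ≤ d →
      ¬ ((15 * Real.sqrt π / 8) * Real.Gamma (((d : ℝ) + 5) / 2) / Real.Gamma (((d : ℝ) + 4) / 2)
        > (3 * π / 16) * ((d : ℝ) + 5))) := by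
  obtain ⟨g32, g52, g72, g92, g112, g132⟩ := gamma_half_vals
  obtain ⟨g3, g4, g5, g6, g7⟩ := gamma_nat_vals
  have hs : 0 < Real.sqrt π := Real.sqrt_pos.mpr pi_pos
  have hs2 : Real.sqrt π ^ 2 = π := Real.sq_sqrt pi_pos.le
  have hπu : π < 3.15 := pi_lt_d2
  have hπl : 3.141592 < π := pi_gt_d6
  constructor
  · intro d hd1 hd9
    interval_cases d <;> push_cast <;> norm_num <;>
      simp only [g52, g72, g92, g112, g132, g3, g4, g5, g6, g7] <;>
      rw [lt_div_iff₀ (by positivity)] <;> norm_num [Nat.factorial] <;>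
      nlinarith [hs2, hs, hπu, hπl, mul_pos hs (sub_pos.mpr hπu)]
  · intro d hd
    have hx : (0:ℝ) < ((d : ℝ) + 4) / 2 := by positivity
    have hd7 : (7:ℝ) ≤ ((d : ℝ) + 4) / 2 := by
      have : (10:ℝ) ≤ (d:ℝ) := by exact_mod_cast hd
      linarith
    have hgx : 0 < Real.Gamma (((d : ℝ) + 4) / 2) := Real.Gamma_pos_of_pos hx
    have hw := wendel hx
    have heq : ((d : ℝ) + 4) / 2 + 1/2 = ((d : ℝ) + 5) / 2 := by ring
    rw [heq] at hw
    push_neg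
    set x := ((d : ℝ) + 4) / 2 with hxdef
    have hd5 : (d : ℝ) + 5 = 2 * x + 1 := by rw [hxdef]; ring
    have key : 15 * Real.sqrt π / 8 * Real.sqrt x ≤ 3 * π / 16 * (2 * x + 1) := by
      have hsx : 0 ≤ Real.sqrt x := Real.sqrt_nonneg x
      have hsx2 : Real.sqrt x ^ 2 = x := Real.sq_sqrt hx.le
      have hsq : (15 * Real.sqrt π / 8 * Real.sqrt x) ^ 2
          ≤ (3 * π / 16 * (2 * x + 1)) ^ 2 := by
        have hl : (15 * Real.sqrt π / 8 * Real.sqrt x) ^ 2 = 225 / 64 * (π * x) := by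
          rw [mul_pow, hsx2, div_pow, mul_pow, hs2]; ring
        rw [hl]
        nlinarith [mul_nonneg (by linarith : (0:ℝ) ≤ π - 3.141592) (sq_nonneg (2*x+1)),
          sq_nonneg (x - 7), hd7]
      have hL : 0 ≤ 15 * Real.sqrt π / 8 * Real.sqrt x := by positivity
      have hR : 0 ≤ 3 * π / 16 * (2 * x + 1) := by
        have := pi_pos; nlinarith
      calc 15 * Real.sqrt π / 8 * Real.sqrt x
          = Real.sqrt ((15 * Real.sqrt π / 8 * Real.sqrt x) ^ 2) := (Real.sqrt_sq hL).symm
        _ ≤ Real.sqrt ((3 * π / 16 * (2 * x + 1)) ^ 2) := Real.sqrt_le_sqrt hsq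
        _ = 3 * π / 16 * (2 * x + 1) := Real.sqrt_sq hR
    calc 15 * Real.sqrt π / 8 * Real.Gamma (((d:ℝ) + 5) / 2) / Real.Gamma x
        ≤ 15 * Real.sqrt π / 8 * (Real.sqrt x * Real.Gamma x) / Real.Gamma x := by
          gcongr
      _ = 15 * Real.sqrt π / 8 * Real.sqrt x := by field_simp
      _ ≤ 3 * π / 16 * (2 * x + 1) := key
      _ = 3 * π / 16 * ((d:ℝ) + 5) := by rw [hd5]
end

section
/- For every α ∈ (0,2], 2(11α+42)·Γ(α/2+2)·Γ(α+7/2) < Γ(α+5)·Γ(α/2+9/2). -/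
open Real

lemma gamma_interp (u v θ : ℝ) (hu : 0 < u) (hv : 0 < v) (h0 : 0 ≤ θ) (h1 : θ ≤ 1) :
    Real.Gamma ((1 - θ) * u + θ * v) ≤ Real.Gamma u ^ (1 - θ) * Real.Gamma v ^ θ := by
  have h0' : 0 ≤ 1 - θ := by linarith
  have hpt : 0 < (1 - θ) * u + θ * v := by
    rcases lt_or_eq_of_le h1 with h | h
    · have h1' : 0 < (1 - θ) * u := mul_pos (by linarith) hu
      nlinarith [mul_nonneg h0 hv.le]
    · subst h
      simpa using hv
  have key := Real.convexOn_log_Gamma.2 (Set.mem_Ioi.mpr hu) (Set.mem_Ioi.mpr hv)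
    h0' h0 (by ring)
  simp only [smul_eq_mul, Function.comp_apply] at key
  have hΓpt := Real.Gamma_pos_of_pos hpt
  calc Real.Gamma ((1 - θ) * u + θ * v)
      = Real.exp (Real.log (Real.Gamma ((1 - θ) * u + θ * v))) := (Real.exp_log hΓpt).symm
    _ ≤ Real.exp ((1 - θ) * Real.log (Real.Gamma u) + θ * Real.log (Real.Gamma v)) :=
        Real.exp_le_exp.mpr key
    _ = Real.Gamma u ^ (1 - θ) * Real.Gamma v ^ θ := by
        rw [Real.exp_add, Real.rpow_def_of_pos (Real.Gamma_pos_of_pos hu),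
          Real.rpow_def_of_pos (Real.Gamma_pos_of_pos hv), mul_comm (1 - θ), mul_comm θ]

lemma gamma_lower (a t : ℝ) (ha : 1 < a) (ht : 0 ≤ t) :
    Real.Gamma a * (Real.Gamma a / Real.Gamma (a - 1)) ^ t ≤ Real.Gamma (a + t) := by
  have h1t : (0:ℝ) < 1 + t := by linarith
  have ha1 : 0 < a - 1 := by linarith
  have hat : 0 < a + t := by linarith
  have hint := gamma_interp (a - 1) (a + t) (1 / (1 + t)) ha1 hat
    (by positivity) (by rw [div_le_one h1t]; linarith)
  have hpt : (1 - 1 / (1 + t)) * (a - 1) + (1 / (1 + t)) * (a + t) = a := by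
    field_simp
    ring
  rw [hpt] at hint
  have hΓa := Real.Gamma_pos_of_pos (by linarith : (0:ℝ) < a)
  have hΓa1 := Real.Gamma_pos_of_pos ha1
  have hΓat := Real.Gamma_pos_of_pos hat
  have h2 : Real.Gamma a ^ (1 + t)
      ≤ (Real.Gamma (a-1) ^ (1 - 1/(1+t)) * Real.Gamma (a+t) ^ (1/(1+t))) ^ (1 + t) :=
    Real.rpow_le_rpow hΓa.le hint h1t.le
  rw [Real.mul_rpow (by positivity) (by positivity), ← Real.rpow_mul hΓa1.le,
    ← Real.rpow_mul hΓat.le] at h2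
  have e1 : (1 - 1/(1+t)) * (1 + t) = t := by field_simp; ring
  have e2 : (1/(1+t)) * (1 + t) = 1 := by field_simp
  rw [e1, e2, Real.rpow_one] at h2
  rw [Real.rpow_add hΓa, Real.rpow_one] at h2
  rw [Real.div_rpow hΓa.le hΓa1.le, ← mul_div_assoc,
    div_le_iff₀ (by positivity : (0:ℝ) < Real.Gamma (a-1) ^ t)]
  nlinarith [h2]

theorem gamma_inequality_d1 (α : ℝ) (hα : α ∈ Set.Ioc (0 : ℝ) 2) :
    2 * (11 * α + 42) * Real.Gamma (α / 2 + 2) * Real.Gamma (α + 7 / 2)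
      < Real.Gamma (α + 5) * Real.Gamma (α / 2 + 9 / 2) := by
  obtain ⟨hα0, hα2⟩ := hα
  have hx0 : 0 < α / 2 := by linarith
  have hx1 : α / 2 ≤ 1 := by linarith
  set G := Real.Gamma (7/2 : ℝ) with hGdef
  have hG : 0 < G := Real.Gamma_pos_of_pos (by norm_num)
  -- Gamma values
  have hΓ2 : Real.Gamma 2 = 1 := Real.Gamma_two
  have hΓ3 : Real.Gamma 3 = 2 := by
    rw [show (3:ℝ) = 2 + 1 by norm_num, Real.Gamma_add_one (by norm_num), hΓ2]; norm_num
  have hΓ4 : Real.Gamma 4 = 6 := by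
    rw [show (4:ℝ) = 3 + 1 by norm_num, Real.Gamma_add_one (by norm_num), hΓ3]; norm_num
  have hΓ5 : Real.Gamma 5 = 24 := by
    rw [show (5:ℝ) = 4 + 1 by norm_num, Real.Gamma_add_one (by norm_num), hΓ4]; norm_num
  have hΓ92 : Real.Gamma (9/2) = (7/2) * G := by
    rw [show (9/2:ℝ) = 7/2 + 1 by norm_num, Real.Gamma_add_one (by norm_num)]
  have hΓ112 : Real.Gamma (11/2) = (63/4) * G := by
    rw [show (11/2:ℝ) = 9/2 + 1 by norm_num, Real.Gamma_add_one (by norm_num), hΓ92]; ring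
  -- upper bounds
  have hA : Real.Gamma (α/2 + 2) ≤ (2:ℝ) ^ (α/2) := by
    have h := gamma_interp 2 3 (α/2) (by norm_num) (by norm_num) hx0.le hx1
    rw [show (1 - α/2) * 2 + (α/2) * 3 = α/2 + 2 by ring, hΓ2, hΓ3, Real.one_rpow, one_mul] at h
    exact h
  have hB : Real.Gamma (α + 7/2) ≤ G * (63/4:ℝ) ^ (α/2) := by
    have h := gamma_interp (7/2) (11/2) (α/2) (by norm_num) (by norm_num) hx0.le hx1
    rw [show (1 - α/2) * (7/2) + (α/2) * (11/2) = α + 7/2 by ring, hΓ112, ← hGdef] at h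
    calc Real.Gamma (α + 7/2) ≤ G ^ (1 - α/2) * ((63/4) * G) ^ (α/2) := h
      _ = G * (63/4:ℝ) ^ (α/2) := by
          rw [Real.mul_rpow (by norm_num) hG.le,
            show G ^ (1 - α/2) * ((63/4:ℝ) ^ (α/2) * G ^ (α/2))
              = (63/4:ℝ) ^ (α/2) * (G ^ (1 - α/2) * G ^ (α/2)) from by ring,
            ← Real.rpow_add hG, show (1 - α/2) + α/2 = 1 by ring, Real.rpow_one]
          ring
  -- lower bounds
  have hC : (7/2) * G * (7/2:ℝ) ^ (α/2) ≤ Real.Gamma (α/2 + 9/2) := by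
    have h := gamma_lower (9/2) (α/2) (by norm_num) hx0.le
    rw [show (9/2:ℝ) - 1 = 7/2 by norm_num, show (9/2:ℝ) + α/2 = α/2 + 9/2 by ring,
      hΓ92, ← hGdef] at h
    have hq : (7/2) * G / G = (7/2:ℝ) := by
      field_simp
    rw [hq] at h
    exact h
  have hD : 24 * (4:ℝ) ^ α ≤ Real.Gamma (α + 5) := by
    have h := gamma_lower 5 α (by norm_num) hα0.le
    rw [show (5:ℝ) - 1 = 4 by norm_num, show (5:ℝ) + α = α + 5 by ring, hΓ5, hΓ4] at h
    norm_num at h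
    exact h
  -- key scalar inequality : 2(11α+42) < 84 * (16/9)^(α/2)
  have hlog : (15/28:ℝ) ≤ Real.log (16/9) := by
    have h87 : (1/8:ℝ) ≤ Real.log (8/7) := by
      have := Real.log_le_sub_one_of_pos (show (0:ℝ) < 7/8 by norm_num)
      rw [show (8/7:ℝ) = (7/8:ℝ)⁻¹ by norm_num, Real.log_inv]
      linarith
    have h76 : (1/7:ℝ) ≤ Real.log (7/6) := by
      have := Real.log_le_sub_one_of_pos (show (0:ℝ) < 6/7 by norm_num)
      rw [show (7/6:ℝ) = (6/7:ℝ)⁻¹ by norm_num, Real.log_inv]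
      linarith
    have h43 : Real.log (4/3:ℝ) = Real.log (8/7) + Real.log (7/6) := by
      rw [← Real.log_mul (by norm_num) (by norm_num)]
      norm_num
    have h169 : Real.log (16/9:ℝ) = 2 * Real.log (4/3) := by
      rw [show (16/9:ℝ) = (4/3)^2 by norm_num, Real.log_pow]
      norm_num
    rw [h169, h43]
    linarith
  have hkey : 2 * (11 * α + 42) < 84 * (16/9:ℝ) ^ (α/2) := by
    have hexp : Real.log (16/9) * (α/2) + 1 ≤ (16/9:ℝ) ^ (α/2) := by
      rw [Real.rpow_def_of_pos (by norm_num : (0:ℝ) < 16/9)]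
      exact Real.add_one_le_exp _
    have hmul : (15/28) * (α/2) ≤ Real.log (16/9) * (α/2) :=
      mul_le_mul_of_nonneg_right hlog hx0.le
    nlinarith
  -- assemble
  have hpow2 : (0:ℝ) < (2:ℝ) ^ (α/2) := by positivity
  have hpow634 : (0:ℝ) < (63/4:ℝ) ^ (α/2) := by positivity
  have hL : 2 * (11 * α + 42) * Real.Gamma (α / 2 + 2) * Real.Gamma (α + 7 / 2)
      ≤ 2 * (11 * α + 42) * G * ((63/2:ℝ) ^ (α/2)) := by
    have hc : (0:ℝ) < 2 * (11 * α + 42) := by linarith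
    have step : 2 * (11 * α + 42) * Real.Gamma (α / 2 + 2) * Real.Gamma (α + 7 / 2)
        ≤ 2 * (11 * α + 42) * ((2:ℝ) ^ (α/2)) * (G * (63/4:ℝ) ^ (α/2)) := by
      apply mul_le_mul (mul_le_mul_of_nonneg_left hA hc.le) hB
        (Real.Gamma_pos_of_pos (by linarith : (0:ℝ) < α + 7/2)).le (by positivity)
    calc 2 * (11 * α + 42) * Real.Gamma (α / 2 + 2) * Real.Gamma (α + 7 / 2)
        ≤ 2 * (11 * α + 42) * ((2:ℝ) ^ (α/2)) * (G * (63/4:ℝ) ^ (α/2)) := step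
      _ = 2 * (11 * α + 42) * G * ((2:ℝ) ^ (α/2) * (63/4:ℝ) ^ (α/2)) := by ring
      _ = 2 * (11 * α + 42) * G * ((63/2:ℝ) ^ (α/2)) := by
          rw [← Real.mul_rpow (by norm_num) (by norm_num)]
          norm_num
  have hR : 84 * G * ((56:ℝ) ^ (α/2)) ≤ Real.Gamma (α + 5) * Real.Gamma (α / 2 + 9 / 2) := by
    have h4 : (4:ℝ) ^ α = (16:ℝ) ^ (α/2) := by
      have h16 : (16:ℝ) = (4:ℝ) ^ (2:ℝ) := by
        rw [show (2:ℝ) = ((2:ℕ):ℝ) by norm_num, Real.rpow_natCast]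
        norm_num
      rw [h16, ← Real.rpow_mul (by norm_num : (0:ℝ) ≤ 4),
        show (2:ℝ) * (α/2) = α by ring]
    have step : (24 * (4:ℝ) ^ α) * ((7/2) * G * (7/2:ℝ) ^ (α/2))
        ≤ Real.Gamma (α + 5) * Real.Gamma (α / 2 + 9 / 2) :=
      mul_le_mul hD hC (by positivity) (Real.Gamma_pos_of_pos (by linarith)).le
    calc 84 * G * ((56:ℝ) ^ (α/2))
        = 84 * G * ((16:ℝ) ^ (α/2) * (7/2:ℝ) ^ (α/2)) := by
          rw [← Real.mul_rpow (by norm_num) (by norm_num)]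
          norm_num
      _ = (24 * (16:ℝ) ^ (α/2)) * ((7/2) * G * (7/2:ℝ) ^ (α/2)) := by ring
      _ = (24 * (4:ℝ) ^ α) * ((7/2) * G * (7/2:ℝ) ^ (α/2)) := by rw [h4]
      _ ≤ Real.Gamma (α + 5) * Real.Gamma (α / 2 + 9 / 2) := step
  have hmid : 2 * (11 * α + 42) * G * ((63/2:ℝ) ^ (α/2)) < 84 * G * ((56:ℝ) ^ (α/2)) := by
    have h56 : (56:ℝ) ^ (α/2) = (63/2:ℝ) ^ (α/2) * (16/9:ℝ) ^ (α/2) := by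
      rw [← Real.mul_rpow (by norm_num) (by norm_num)]
      norm_num
    rw [h56]
    have hpos : (0:ℝ) < G * (63/2:ℝ) ^ (α/2) := by positivity
    calc 2 * (11 * α + 42) * G * ((63/2:ℝ) ^ (α/2))
        = (2 * (11 * α + 42)) * (G * (63/2:ℝ) ^ (α/2)) := by ring
      _ < (84 * (16/9:ℝ) ^ (α/2)) * (G * (63/2:ℝ) ^ (α/2)) :=
          mul_lt_mul_of_pos_right hkey hpos
      _ = 84 * G * ((63/2:ℝ) ^ (α/2) * (16/9:ℝ) ^ (α/2)) := by ring
  calc 2 * (11 * α + 42) * Real.Gamma (α / 2 + 2) * Real.Gamma (α + 7 / 2)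
      ≤ 2 * (11 * α + 42) * G * ((63/2:ℝ) ^ (α/2)) := hL
    _ < 84 * G * ((56:ℝ) ^ (α/2)) := hmid
    _ ≤ Real.Gamma (α + 5) * Real.Gamma (α / 2 + 9 / 2) := hR
end

section
/- For every α ∈ (0,2], 24 < (α+3)(α+4)·Γ(α+3)·Γ(α/2+9/2)/(Γ(α/2+2)·Γ(α+9/2)). -/
open Real Set

lemma strictConvexOn_log_Gamma' :
    StrictConvexOn ℝ (Set.Ioi (0:ℝ)) (fun x => Real.log (Real.Gamma x)) := by
  have h1 : ConvexOn ℝ (Set.Ioi (0:ℝ)) (fun x => Real.log (Real.Gamma (x + 1))) := by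
    refine ⟨convex_Ioi 0, fun x hx y hy a b ha hb hab => ?_⟩
    have hx1 : (x + 1 : ℝ) ∈ Set.Ioi (0:ℝ) := by simp at hx ⊢; linarith
    have hy1 : (y + 1 : ℝ) ∈ Set.Ioi (0:ℝ) := by simp at hy ⊢; linarith
    have := Real.convexOn_log_Gamma.2 hx1 hy1 ha hb hab
    simp only [Function.comp_apply, smul_eq_mul] at this ⊢
    have hcomb : a * (x + 1) + b * (y + 1) = a * x + b * y + 1 := by linear_combination hab
    rwa [hcomb] at this
  have h2 : StrictConvexOn ℝ (Set.Ioi (0:ℝ)) (fun x : ℝ => -Real.log x) :=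
    strictConcaveOn_log_Ioi.neg
  have h3 := h1.add_strictConvexOn h2
  have key : ∀ z : ℝ, 0 < z →
      Real.log (Real.Gamma (z + 1)) + -Real.log z = Real.log (Real.Gamma z) := by
    intro z hz
    rw [Real.Gamma_add_one (ne_of_gt hz), Real.log_mul (ne_of_gt hz)
      (ne_of_gt (Real.Gamma_pos_of_pos hz))]
    ring
  refine ⟨convex_Ioi 0, fun x hx y hy hxy a b ha hb hab => ?_⟩
  have hx0 : (0:ℝ) < x := hx
  have hy0 : (0:ℝ) < y := hy
  have hc0 : (0:ℝ) < a • x + b • y := by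
    simp only [smul_eq_mul]; nlinarith
  have := h3.2 hx hy hxy ha hb hab
  simp only [Pi.add_apply] at this
  rwa [key x hx0, key y hy0, key _ hc0] at this

lemma gamma_supermod {x y a : ℝ} (hx : 0 < x) (hxy : x < y) (ha : 0 < a) :
    Real.Gamma (x + a) * Real.Gamma y < Real.Gamma x * Real.Gamma (y + a) := by
  have hy : 0 < y := hx.trans hxy
  have hd : 0 < y + a - x := by linarith
  set t : ℝ := (y - x) / (y + a - x) with ht_def
  set s : ℝ := a / (y + a - x) with hs_def
  have ht : 0 < t := div_pos (by linarith) hd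
  have hs : 0 < s := div_pos ha hd
  have hts : t + s = 1 := by
    rw [ht_def, hs_def, ← add_div, div_eq_one_iff_eq (ne_of_gt hd)]; ring
  have hst : s + t = 1 := by linarith
  have hxmem : x ∈ Set.Ioi (0:ℝ) := hx
  have hyamem : y + a ∈ Set.Ioi (0:ℝ) := Set.mem_Ioi.mpr (by linarith)
  have hne : x ≠ y + a := by intro h; linarith [h]
  have h1 := strictConvexOn_log_Gamma'.2 hxmem hyamem hne ht hs hts
  have h2 := strictConvexOn_log_Gamma'.2 hxmem hyamem hne hs ht hst
  have e1 : t • x + s • (y + a) = x + a := by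
    simp only [smul_eq_mul, ht_def, hs_def]; field_simp; ring
  have e2 : s • x + t • (y + a) = y := by
    simp only [smul_eq_mul, ht_def, hs_def]; field_simp; ring
  rw [e1] at h1
  rw [e2] at h2
  simp only [smul_eq_mul] at h1 h2
  have c1 : t * Real.log (Real.Gamma x) + s * Real.log (Real.Gamma x)
      = Real.log (Real.Gamma x) := by rw [← add_mul, hts, one_mul]
  have c2 : t * Real.log (Real.Gamma (y + a)) + s * Real.log (Real.Gamma (y + a))
      = Real.log (Real.Gamma (y + a)) := by rw [← add_mul, hts, one_mul]
  have hsum : Real.log (Real.Gamma (x + a)) + Real.log (Real.Gamma y) <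
      Real.log (Real.Gamma x) + Real.log (Real.Gamma (y + a)) := by linarith
  have p1 := Real.Gamma_pos_of_pos (by linarith : (0:ℝ) < x + a)
  have p2 := Real.Gamma_pos_of_pos hy
  have p3 := Real.Gamma_pos_of_pos hx
  have p4 := Real.Gamma_pos_of_pos (by linarith : (0:ℝ) < y + a)
  have := Real.exp_lt_exp.2 hsum
  rwa [Real.exp_add, Real.exp_add, Real.exp_log p1, Real.exp_log p2,
    Real.exp_log p3, Real.exp_log p4] at this

theorem gamma_inequality_24 (α : ℝ) (hα : α ∈ Set.Ioc (0 : ℝ) 2) :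
    24 < (α + 3) * (α + 4) *
      (Real.Gamma (α + 3) * Real.Gamma (α / 2 + 9 / 2) /
        (Real.Gamma (α / 2 + 2) * Real.Gamma (α + 9 / 2))) := by
  obtain ⟨hα0, hα2⟩ := hα
  have G5 : Real.Gamma 5 = 24 := by
    have h : ((5:ℝ)) = (4:ℕ) + 1 := by norm_num
    rw [h, Real.Gamma_nat_eq_factorial]; norm_num [Nat.factorial]
  have G2 : Real.Gamma 2 = 1 := by
    have h : ((2:ℝ)) = (1:ℕ) + 1 := by norm_num
    rw [h, Real.Gamma_nat_eq_factorial]; norm_num [Nat.factorial]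
  -- first supermodularity: Γ(5)Γ(α+9/2) < Γ(9/2)Γ(α+5)
  have h1 : Real.Gamma (9/2 + 1/2) * Real.Gamma (α + 9/2) <
      Real.Gamma (9/2) * Real.Gamma (α + 9/2 + 1/2) :=
    gamma_supermod (by norm_num) (by linarith) (by norm_num)
  have e1 : (9/2 + 1/2 : ℝ) = 5 := by norm_num
  have e2 : (α + 9/2 + 1/2 : ℝ) = α + 5 := by ring
  rw [e1, e2, G5] at h1
  -- second: Γ(9/2)Γ(α/2+2) < Γ(2)Γ(α/2+9/2)
  have h2 : Real.Gamma (2 + 5/2) * Real.Gamma (α/2 + 2) <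
      Real.Gamma 2 * Real.Gamma (α/2 + 2 + 5/2) :=
    gamma_supermod (by norm_num) (by linarith) (by norm_num)
  have e3 : (2 + 5/2 : ℝ) = 9/2 := by norm_num
  have e4 : (α/2 + 2 + 5/2 : ℝ) = α/2 + 9/2 := by ring
  rw [e3, e4, G2, one_mul] at h2
  -- Γ(α+5) = (α+4)(α+3)Γ(α+3)
  have hG5a : Real.Gamma (α + 5) = (α + 4) * ((α + 3) * Real.Gamma (α + 3)) := by
    have a4 : (α + 5 : ℝ) = (α + 4) + 1 := by ring
    have a3 : (α + 4 : ℝ) = (α + 3) + 1 := by ring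
    rw [a4, Real.Gamma_add_one (by linarith), a3, Real.Gamma_add_one (by linarith)]
  have p92 := Real.Gamma_pos_of_pos (by norm_num : (0:ℝ) < 9/2)
  have pa3 := Real.Gamma_pos_of_pos (by linarith : (0:ℝ) < α + 3)
  have pa92 := Real.Gamma_pos_of_pos (by linarith : (0:ℝ) < α + 9/2)
  have ph2 := Real.Gamma_pos_of_pos (by linarith : (0:ℝ) < α/2 + 2)
  have ph92 := Real.Gamma_pos_of_pos (by linarith : (0:ℝ) < α/2 + 9/2)
  have hDpos : 0 < Real.Gamma (α/2 + 2) * Real.Gamma (α + 9/2) := mul_pos ph2 pa92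
  have key : 24 * (Real.Gamma (α/2 + 2) * Real.Gamma (α + 9/2)) <
      (α + 3) * (α + 4) * (Real.Gamma (α + 3) * Real.Gamma (α/2 + 9/2)) := by
    rw [hG5a] at h1
    nlinarith [mul_pos (mul_pos (by norm_num : (0:ℝ) < 24) pa92) ph2,
      mul_lt_mul_of_pos_left h2 (mul_pos (mul_pos (by linarith : (0:ℝ) < α+4)
        (mul_pos (by linarith : (0:ℝ) < α+3) pa3)) (by norm_num : (0:ℝ) < 1)),
      mul_lt_mul_of_pos_right h1 ph2]
  have hrw : (α + 3) * (α + 4) *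
      (Real.Gamma (α + 3) * Real.Gamma (α / 2 + 9 / 2) /
        (Real.Gamma (α / 2 + 2) * Real.Gamma (α + 9 / 2))) =
      (α + 3) * (α + 4) * (Real.Gamma (α + 3) * Real.Gamma (α/2 + 9/2)) /
        (Real.Gamma (α/2 + 2) * Real.Gamma (α + 9/2)) := by ring
  rw [hrw, lt_div_iff₀ hDpos]
  linarith [key]
end
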